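/- arXiv:2406.09429 — 8 statements merged into one kernel-verified Lean document; each statement's English description precedes it below -/
import Mathlib

section
/- Let A₁,…,A_k, B₁,…,B_k, C be n×n complex matrices simultaneously diagonalized by S, with eigenvalue vectors aʲ, bʲ, c as above, and let Γ_{rs} = ∑_{j=1}^k aʲ_r bʲ_s. Then the equation ∑_{j=1}^k A_j X B_j = C has a solution X if and only if for every r ∈ {1,…,n}, either Γ_{rr} ≠ 0 or c_r = 0. -/
open Matrix

/-! Conjugating by `S` turns the equation into `∑ⱼ diag(aʲ) Y diag(bʲ) = diag(c)` for
`Y = S⁻¹XS`, and the left side is the entrywise product `Γ ⊙ Y`. An entrywise equation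
`Γ ⊙ Y = D` is solvable exactly when every entry with `Γᵣₛ = 0` has `Dᵣₛ = 0`, and off the
diagonal `D = diag(c)` vanishes. -/

theorem Units.exists_sum_mul_mul_eq_iff_conj {R ι : Type*} [Ring R] [Fintype ι] (u : Rˣ)
    (a b : ι → R) (c : R) :
    (∃ x, ∑ j, a j * x * b j = c) ↔
      ∃ y, ∑ j, (↑u⁻¹ * a j * u) * y * (↑u⁻¹ * b j * u) = ↑u⁻¹ * c * u := by
  have conj_sum (x : R) : ∑ j, (↑u⁻¹ * a j * u) * (↑u⁻¹ * x * u) * (↑u⁻¹ * b j * u) =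
      ↑u⁻¹ * (∑ j, a j * x * b j) * u := by
    simp [Finset.mul_sum, Finset.sum_mul, mul_assoc]
  constructor
  · rintro ⟨x, hx⟩
    exact ⟨↑u⁻¹ * x * u, by rw [conj_sum, hx]⟩
  · rintro ⟨y, hy⟩
    refine ⟨u * y * ↑u⁻¹, ?_⟩
    have hy' : ↑u⁻¹ * (u * y * ↑u⁻¹) * u = y := by simp [mul_assoc]
    rw [← hy', conj_sum] at hy
    simpa using hy

theorem Matrix.sum_diagonal_mul_mul_diagonal {m ι α : Type*} [Fintype m] [DecidableEq m]
    [Fintype ι] [CommSemiring α] (a b : ι → m → α) (Y : Matrix m m α) :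
    ∑ j, diagonal (a j) * Y * diagonal (b j) = (∑ j, vecMulVec (a j) (b j)) ⊙ Y := by
  ext r s
  simp only [Matrix.sum_apply, hadamard_apply, diagonal_mul, mul_diagonal, vecMulVec_apply,
    Finset.sum_mul]
  exact Finset.sum_congr rfl fun j _ => mul_right_comm _ _ _

theorem Matrix.exists_hadamard_eq_iff {m n α : Type*} [GroupWithZero α] (G D : Matrix m n α) :
    (∃ Y, G ⊙ Y = D) ↔ ∀ i j, G i j ≠ 0 ∨ D i j = 0 := by
  constructor
  · rintro ⟨Y, rfl⟩ i j
    by_cases h : G i j = 0 <;> simp [h]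
  · intro h
    refine ⟨of fun i j => (G i j)⁻¹ * D i j, ?_⟩
    ext i j
    rcases h i j with h | h <;> simp [h]

theorem Matrix.exists_hadamard_eq_diagonal_iff {m α : Type*} [DecidableEq m] [GroupWithZero α]
    (G : Matrix m m α) (c : m → α) :
    (∃ Y, G ⊙ Y = diagonal c) ↔ ∀ r, G r r ≠ 0 ∨ c r = 0 := by
  rw [exists_hadamard_eq_iff]
  refine ⟨fun h r => by simpa using h r r, fun h r s => ?_⟩
  rcases eq_or_ne r s with rfl | hrs
  · simpa using h r
  · simp [hrs]

/-- Consistency criterion: with all parameters simultaneously diagonalized by `S`,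
`∑ j, A j * X * B j = C` has a solution iff for every `r`, `Γ_{rr} ≠ 0` or `c_r = 0`. -/
theorem stmt4 {n k : ℕ} (A B : Fin k → Matrix (Fin n) (Fin n) ℂ)
    (C S : Matrix (Fin n) (Fin n) ℂ)
    (a b : Fin k → Fin n → ℂ) (c : Fin n → ℂ)
    (hS : IsUnit S.det)
    (hA : ∀ j, S⁻¹ * A j * S = Matrix.diagonal (a j))
    (hB : ∀ j, S⁻¹ * B j * S = Matrix.diagonal (b j))
    (hC : S⁻¹ * C * S = Matrix.diagonal c) :
    (∃ X : Matrix (Fin n) (Fin n) ℂ, ∑ j, A j * X * B j = C) ↔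
      ∀ r : Fin n, (∑ j, a j r * b j r) ≠ 0 ∨ c r = 0 := by
  rw [(nonsingInvUnit S hS).exists_sum_mul_mul_eq_iff_conj]
  change (∃ Y, ∑ j, (S⁻¹ * A j * S) * Y * (S⁻¹ * B j * S) = S⁻¹ * C * S) ↔ _
  simp only [hA, hB, hC, sum_diagonal_mul_mul_diagonal, exists_hadamard_eq_diagonal_iff,
    Matrix.sum_apply, vecMulVec_apply]
end

section
/- With A₁,…,A_k, B₁,…,B_k, C simultaneously diagonalizable forming a commuting set, the linear matrix equation ∑_j A_j X B_j = C is consistent if and only if the standard equation (∑_j A_j B_j) X = C is consistent. -/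
/-!
Since the family is commuting and each member is diagonalizable, there is a common eigenbasis;
passing to it is an algebra isomorphism of matrix rings, under which solvability of both
equations is preserved and all of `A j`, `B j`, `C` become diagonal, say with entries `a j r`,
`b j r`, `c r`. For diagonal data only the diagonal entries of `X` matter, and both equations
become the scalar equations `(∑ j, a j r * b j r) * x r = c r`.
-/

open Matrix

/-- A matrix is diagonalizable. -/
def Diagonalizable {n : ℕ} (M : Matrix (Fin n) (Fin n) ℂ) : Prop :=
  ∃ (S : Matrix (Fin n) (Fin n) ℂ) (d : Fin n → ℂ),
    IsUnit S.det ∧ S⁻¹ * M * S = Matrix.diagonal d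

open Module End

section RingEquiv

variable {R R' ι : Type*} [Semiring R] [Semiring R']

lemma RingEquiv.exists_sum_mul_mul_eq_iff (φ : R ≃+* R') (s : Finset ι) (a b : ι → R) (c : R) :
    (∃ x, ∑ j ∈ s, a j * x * b j = c) ↔ ∃ y, ∑ j ∈ s, φ (a j) * y * φ (b j) = φ c := by
  refine φ.symm.surjective.exists.trans (exists_congr fun y => ?_)
  rw [← φ.injective.eq_iff]
  simp [map_sum, map_mul]

lemma RingEquiv.exists_mul_eq_iff (φ : R ≃+* R') (a c : R) :
    (∃ x, a * x = c) ↔ ∃ y, φ a * y = φ c := by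
  refine φ.symm.surjective.exists.trans (exists_congr fun y => ?_)
  rw [← φ.injective.eq_iff]
  simp

end RingEquiv

section Diagonal

variable {n ι R : Type*} [Fintype n] [DecidableEq n] [CommSemiring R]

lemma exists_diagonal_mul_eq_diagonal_iff (m c : n → R) :
    (∃ Y : Matrix n n R, diagonal m * Y = diagonal c) ↔ ∃ y : n → R, ∀ r, m r * y r = c r := by
  constructor
  · rintro ⟨Y, hY⟩
    exact ⟨fun r => Y r r, fun r => by simpa using congrFun (congrFun hY r) r⟩
  · rintro ⟨y, hy⟩
    exact ⟨diagonal y, by rw [diagonal_mul_diagonal]; exact congrArg diagonal (funext hy)⟩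

lemma exists_sum_diagonal_mul_mul_diagonal_eq_diagonal_iff (s : Finset ι) (a b : ι → n → R)
    (c : n → R) :
    (∃ Y : Matrix n n R, ∑ j ∈ s, diagonal (a j) * Y * diagonal (b j) = diagonal c) ↔
      ∃ y : n → R, ∀ r, (∑ j ∈ s, a j r * b j r) * y r = c r := by
  constructor
  · rintro ⟨Y, hY⟩
    refine ⟨fun r => Y r r, fun r => ?_⟩
    simpa [Matrix.sum_apply, Finset.sum_mul, mul_right_comm] using congrFun (congrFun hY r) r
  · rintro ⟨y, hy⟩
    refine ⟨diagonal y, ?_⟩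
    ext r t
    rcases eq_or_ne r t with rfl | hrt
    · simpa [Matrix.sum_apply, Finset.sum_mul, mul_right_comm] using hy r
    · simp [Matrix.sum_apply, hrt]

lemma exists_sum_diagonal_mul_diagonal_mul_eq_diagonal_iff (s : Finset ι) (a b : ι → n → R)
    (c : n → R) :
    (∃ Y : Matrix n n R, (∑ j ∈ s, diagonal (a j) * diagonal (b j)) * Y = diagonal c) ↔
      ∃ y : n → R, ∀ r, (∑ j ∈ s, a j r * b j r) * y r = c r := by
  have hsum : ∑ j ∈ s, diagonal (a j) * diagonal (b j) =
      diagonal fun r => ∑ j ∈ s, a j r * b j r := by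
    simp only [diagonal_mul_diagonal]
    exact (map_sum (diagonalAddMonoidHom n R) (fun j r => a j r * b j r) s).symm.trans
      (congrArg diagonal (Finset.sum_fn s _))
  rw [hsum, exists_diagonal_mul_eq_diagonal_iff]

end Diagonal

section Eigenbasis

variable {R V n : Type*} [CommRing R] [AddCommGroup V] [Module R V] [Fintype n] [DecidableEq n]

lemma LinearMap.toMatrix_eq_diagonal_of_apply_eq_smul (b : Basis n R V) {f : End R V}
    {d : n → R} (h : ∀ i, f (b i) = d i • b i) : LinearMap.toMatrix b b f = diagonal d := by
  ext i j
  rcases eq_or_ne i j with rfl | hij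
  · simp [LinearMap.toMatrix_apply, h]
  · simp [LinearMap.toMatrix_apply, h, hij]

lemma Module.End.maxGenEigenspace_eq_eigenspace_of_toMatrix_eq_diagonal [IsDomain R]
    (b : Basis n R V) {f : End R V} {d : n → R} (h : LinearMap.toMatrix b b f = diagonal d)
    (μ : R) : maxGenEigenspace f μ = eigenspace f μ := by
  rw [← Matrix.toLin_toMatrix b b f, h]
  exact maxGenEigenspace_toLin_diagonal_eq_eigenspace d b

lemma Matrix.toMatrix_toLin'_basis_map_toLinearEquiv (S F : Matrix n n R) (hS : IsUnit S.det) :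
    LinearMap.toMatrix ((Pi.basisFun R n).map (S.toLinearEquiv (Pi.basisFun R n) hS))
      ((Pi.basisFun R n).map (S.toLinearEquiv (Pi.basisFun R n) hS)) F.toLin' = S⁻¹ * F * S := by
  ext i j
  simp [LinearMap.toMatrix_apply, Matrix.toLinearEquiv, Matrix.toLin_eq_toLin', mulVec, mul_apply,
    dotProduct]

end Eigenbasis

theorem Module.End.exists_basis_forall_apply_eq_smul_of_commute {K V ι : Type*} [Field K]
    [IsAlgClosed K] [AddCommGroup V] [Module K V] [FiniteDimensional K V] (f : ι → End K V)
    (hcomm : ∀ i j, Commute (f i) (f j))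
    (hss : ∀ i μ, maxGenEigenspace (f i) μ = eigenspace (f i) μ) :
    ∃ (b : Basis (Fin (finrank K V)) K V) (d : ι → Fin (finrank K V) → K),
      ∀ i j, f i (b j) = d i j • b j := by
  classical
  let W (χ : ι → K) : Submodule K V := ⨅ i, maxGenEigenspace (f i) (χ i)
  have hspan : ⨆ χ, W χ = ⊤ :=
    iSup_iInf_maxGenEigenspace_eq_top_of_iSup_maxGenEigenspace_eq_top_of_commute f
      (fun i j _ => hcomm i j) fun i => iSup_maxGenEigenspace_eq_top (f i)
  have hindep : iSupIndep W := independent_iInf_maxGenEigenspace_of_forall_mapsTo f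
    fun i j μ => mapsTo_maxGenEigenspace_of_comm (hcomm j i) μ
  have hW : DirectSum.IsInternal W :=
    (DirectSum.isInternal_submodule_iff_iSupIndep_and_iSup_eq_top W).mpr ⟨hindep, hspan⟩
  let b₀ := hW.collectedBasis fun χ => Basis.ofVectorSpace K (W χ)
  have : Fintype (Σ χ, Basis.ofVectorSpaceIndex K (W χ)) := FiniteDimensional.fintypeBasisIndex b₀
  let e := Fintype.equivFinOfCardEq (finrank_eq_card_basis b₀).symm
  refine ⟨b₀.reindex e, fun i j => (e.symm j).1 i, fun i j => ?_⟩
  have hmem : b₀ (e.symm j) ∈ W (e.symm j).1 := hW.collectedBasis_mem _ (e.symm j)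
  have := (Submodule.mem_iInf _).mp hmem i
  rw [hss] at this
  simpa using mem_eigenspace_iff.mp this

lemma Diagonalizable.maxGenEigenspace_toLin'_eq_eigenspace {n : ℕ}
    {F : Matrix (Fin n) (Fin n) ℂ} (hF : Diagonalizable F) (μ : ℂ) :
    maxGenEigenspace F.toLin' μ = eigenspace F.toLin' μ := by
  obtain ⟨S, d, hS, hSF⟩ := hF
  exact maxGenEigenspace_eq_eigenspace_of_toMatrix_eq_diagonal _
    ((S.toMatrix_toLin'_basis_map_toLinearEquiv F hS).trans hSF) μ

lemma exists_algEquiv_forall_eq_diagonal_of_commute {n : ℕ} {ι : Type*}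
    (F : ι → Matrix (Fin n) (Fin n) ℂ) (hd : ∀ i, Diagonalizable (F i))
    (hc : ∀ i j, Commute (F i) (F j)) :
    ∃ (m : ℕ) (φ : Matrix (Fin n) (Fin n) ℂ ≃ₐ[ℂ] Matrix (Fin m) (Fin m) ℂ) (d : ι → Fin m → ℂ),
      ∀ i, φ (F i) = diagonal (d i) := by
  obtain ⟨b, d, hbd⟩ := exists_basis_forall_apply_eq_smul_of_commute (fun i => (F i).toLin')
    (fun i j => (hc i j).map Matrix.toLinAlgEquiv')
    fun i => (hd i).maxGenEigenspace_toLin'_eq_eigenspace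
  exact ⟨_, Matrix.toLinAlgEquiv'.trans (LinearMap.toMatrixAlgEquiv b), d,
    fun i => LinearMap.toMatrix_eq_diagonal_of_apply_eq_smul b (hbd i)⟩

/-- For a commuting set of diagonalizable matrices, `∑ j, A j * X * B j = C` is
consistent iff the standard equation `(∑ j, A j * B j) * X = C` is consistent. -/
theorem stmt5 {n k : ℕ} (A B : Fin k → Matrix (Fin n) (Fin n) ℂ)
    (C : Matrix (Fin n) (Fin n) ℂ)
    (hdA : ∀ j, Diagonalizable (A j)) (hdB : ∀ j, Diagonalizable (B j))
    (hdC : Diagonalizable C)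
    (hAA : ∀ j l, A j * A l = A l * A j)
    (hBB : ∀ j l, B j * B l = B l * B j)
    (hAB : ∀ j l, A j * B l = B l * A j)
    (hAC : ∀ j, A j * C = C * A j)
    (hBC : ∀ j, B j * C = C * B j) :
    (∃ X : Matrix (Fin n) (Fin n) ℂ, ∑ j, A j * X * B j = C) ↔
      (∃ X : Matrix (Fin n) (Fin n) ℂ, (∑ j, A j * B j) * X = C) := by
  let F : (Fin k ⊕ Fin k) ⊕ Unit → Matrix (Fin n) (Fin n) ℂ := Sum.elim (Sum.elim A B) fun _ => C
  have hdF : ∀ i, Diagonalizable (F i) := by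
    rintro ((j | j) | -)
    exacts [hdA j, hdB j, hdC]
  have hcF : ∀ i j, Commute (F i) (F j) := by
    rintro ((i | i) | -) ((j | j) | -)
    exacts [hAA i j, hAB i j, hAC i, (hAB j i).symm, hBB i j, hBC i, (hAC j).symm, (hBC j).symm,
      rfl]
  obtain ⟨m, φ, d, hφ⟩ := exists_algEquiv_forall_eq_diagonal_of_commute F hdF hcF
  have hA j : φ (A j) = diagonal (d (.inl (.inl j))) := hφ (.inl (.inl j))
  have hB j : φ (B j) = diagonal (d (.inl (.inr j))) := hφ (.inl (.inr j))
  have hC : φ C = diagonal (d (.inr ())) := hφ (.inr ())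
  rw [φ.toRingEquiv.exists_sum_mul_mul_eq_iff, φ.toRingEquiv.exists_mul_eq_iff]
  simp only [AlgEquiv.coe_ringEquiv, map_sum, map_mul, hA, hB, hC]
  rw [exists_sum_diagonal_mul_mul_diagonal_eq_diagonal_iff,
    exists_sum_diagonal_mul_diagonal_mul_eq_diagonal_iff]
end

section
/- With A₁,…,A_k, B₁,…,B_k, C forming a commuting set of diagonalizable n×n complex matrices, the equation ∑_j A_j X B_j = C has a solution if and only if X̂ = (∑_j A_j B_j)^D C is a solution. -/
open Matrix

/-- `D` is the Drazin inverse of `A`. -/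
def IsDrazinInverse {n : ℕ} (A D : Matrix (Fin n) (Fin n) ℂ) : Prop :=
  (∃ k : ℕ, A ^ (k + 1) * D = A ^ k) ∧ D * A * D = D ∧ A * D = D * A

/-
Write `S = ∑ⱼ Aⱼ Bⱼ`. Every `Aⱼ`, `Bⱼ`, `C` commutes with `S`, hence with its Drazin inverse `D`,
so `∑ⱼ Aⱼ (D C) Bⱼ = S D C` and the claim is that solvability forces `(1 - S D) C = 0`.
As a sum of products of commuting semisimple matrices, `S` is semisimple, so `S D S = S` and
`Q = 1 - S D` is an idempotent with `Q S = 0`. If `∑ⱼ Aⱼ X Bⱼ = C` and `G` is the group inverse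
of the diagonalizable `C`, then `tr (Q G C) = tr (Q G S X) = 0`; an idempotent of trace zero
vanishes, so `Q (G C) = 0` and `Q C = C Q (G C) = 0`.
-/

open Polynomial

section Drazin
open MulOpposite
variable {M : Type*} [Monoid M] {s d m : M} {k : ℕ}

theorem pow_succ_mul_pow_eq_of_mul_mul_eq (hdsd : d * s * d = d) (hsd : Commute s d) (j : ℕ) :
    d ^ (j + 1) * s ^ j = d := by
  have hp : d * (d * s) = d := by rw [← hsd.eq, ← mul_assoc, hdsd]
  have hpow : ∀ j : ℕ, d * (d * s) ^ j = d := fun j => by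
    induction j with
    | zero => simp
    | succ j ih => rw [pow_succ, ← mul_assoc, ih, hp]
  rw [pow_succ', mul_assoc, ← hsd.symm.mul_pow, hpow]

theorem mul_eq_mul_mul_mul_of_drazin (hk : s ^ (k + 1) * d = s ^ k) (hdsd : d * s * d = d)
    (hsd : Commute s d) (hm : Commute m s) : d * m = d * s * m * d := by
  have hds : (d * s) ^ (k + 1) = d * s :=
    (show IsIdempotentElem (d * s) by rw [IsIdempotentElem, ← mul_assoc, hdsd]).pow_succ_eq k
  calc d * m = d ^ (k + 1) * (m * s ^ k) := by
        conv_lhs => rw [← pow_succ_mul_pow_eq_of_mul_mul_eq hdsd hsd k]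
        rw [mul_assoc, (hm.pow_right k).eq]
    _ = d ^ (k + 1) * (m * s ^ (k + 1)) * d := by rw [← hk]; simp only [mul_assoc]
    _ = (d * s) ^ (k + 1) * m * d := by
        rw [(hm.pow_right (k + 1)).eq, hsd.symm.mul_pow]; simp only [mul_assoc]
    _ = d * s * m * d := by rw [hds]

theorem commute_drazin_of_commute (hk : s ^ (k + 1) * d = s ^ k) (hdsd : d * s * d = d)
    (hsd : Commute s d) (hm : Commute m s) : Commute m d := by
  -- the mirror identity `m * d = d * m * s * d`, read off in the opposite monoid
  have hB : op d * op m = op d * op s * op m * op d :=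
    mul_eq_mul_mul_mul_of_drazin (k := k)
      (by rw [← op_pow, ← op_pow, ← op_mul, ← (hsd.pow_left _).eq, hk])
      (by simp only [← op_mul, ← mul_assoc, hdsd]) hsd.op hm.op
  simp only [← op_mul, op_inj] at hB
  show m * d = d * m
  rw [hB, mul_eq_mul_mul_mul_of_drazin hk hdsd hsd hm, ← mul_assoc m s d, hm.eq]
  simp only [mul_assoc]

end Drazin

theorem Module.End.isSemisimple_of_aeval_prod_X_sub_C_eq_zero {K V : Type*} [Field K]
    [AddCommGroup V] [Module K V] {f : Module.End K V} (s : Finset K)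
    (h : aeval f (∏ z ∈ s, (X - C z)) = 0) : f.IsSemisimple :=
  isSemisimple_of_squarefree_aeval_eq_zero
    (separable_prod_X_sub_C_iff'.mpr fun _ _ _ _ hxy => hxy).squarefree h

theorem Module.End.isSemisimple_of_isIdempotentElem {K V : Type*} [Field K]
    [AddCommGroup V] [Module K V] {f : Module.End K V} (hf : IsIdempotentElem f) :
    f.IsSemisimple := by
  classical
  refine isSemisimple_of_aeval_prod_X_sub_C_eq_zero {0, 1} ?_
  rw [Finset.prod_pair zero_ne_one]
  simp [mul_sub, hf.eq]

theorem Module.End.isSemisimple_sum_of_commute {K V ι : Type*} [Field K] [PerfectField K]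
    [AddCommGroup V] [Module K V] [FiniteDimensional K V] (t : Finset ι) (f : ι → Module.End K V)
    (hc : ∀ i ∈ t, ∀ j ∈ t, Commute (f i) (f j)) (hs : ∀ i ∈ t, (f i).IsSemisimple) :
    (∑ i ∈ t, f i).IsSemisimple := by
  induction t using Finset.cons_induction with
  | empty => simp [isSemisimple_zero]
  | cons a t _ ih =>
    rw [Finset.sum_cons]
    refine IsSemisimple.add_of_commute ?_ (hs a (t.mem_cons_self a)) (ih ?_ ?_)
    · exact Commute.sum_right t _ _ fun i hi =>
        hc a (t.mem_cons_self a) i (Finset.mem_cons_of_mem hi)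
    · exact fun i hi j hj => hc i (Finset.mem_cons_of_mem hi) j (Finset.mem_cons_of_mem hj)
    · exact fun i hi => hs i (Finset.mem_cons_of_mem hi)

section SylvesterSum

variable {ι : Type*} [Fintype ι]

theorem sum_mul_mul_eq_mul_sum {R : Type*} [Semiring R] {a b : ι → R} {y : R}
    (hy : ∀ j, Commute (a j) y) : ∑ j, a j * y * b j = y * ∑ j, a j * b j := by
  rw [Finset.mul_sum]
  exact Finset.sum_congr rfl fun j _ => by rw [(hy j).eq, mul_assoc]

variable {m : Type*} [Fintype m]

theorem trace_mul_sum_mul_mul {R : Type*} [CommSemiring R] {A B : ι → Matrix m m R}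
    {X Y : Matrix m m R} (hYB : ∀ j, Commute Y (B j))
    (hAB : ∀ j, Commute (A j) (B j)) :
    trace (Y * ∑ j, A j * X * B j) = trace (Y * (∑ j, A j * B j) * X) := by
  simp only [Finset.mul_sum, Finset.sum_mul, trace_sum]
  refine Finset.sum_congr rfl fun j _ => ?_
  calc trace (Y * (A j * X * B j)) = trace (B j * (Y * A j * X)) := by
        rw [trace_mul_comm (B j)]; simp only [Matrix.mul_assoc]
    _ = trace (Y * (A j * B j) * X) := by
        simp only [← Matrix.mul_assoc]
        rw [← (hYB j).eq, Matrix.mul_assoc Y, ← (hAB j).eq, ← Matrix.mul_assoc]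

theorem mul_eq_zero_of_sum_mul_mul_eq {K : Type*} [Field K] [CharZero K] [DecidableEq m]
    {A B : ι → Matrix m m K} {C G Q X : Matrix m m K}
    (hQ : IsIdempotentElem Q) (hQS : Q * ∑ j, A j * B j = 0) (hCGC : C * G * C = C)
    (hQC : Commute Q C) (hQG : Commute Q G) (hQGB : ∀ j, Commute (Q * G) (B j))
    (hAB : ∀ j, Commute (A j) (B j))
    (hX : ∑ j, A j * X * B j = C) : Q * C = 0 := by
  have htr : trace (Q * (G * C)) = 0 := by
    rw [← Matrix.mul_assoc, ← hX, trace_mul_sum_mul_mul hQGB hAB, hQG.eq,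
      Matrix.mul_assoc G, hQS, Matrix.mul_zero, Matrix.zero_mul, trace_zero]
  have hGC : IsIdempotentElem (G * C) := by
    rw [IsIdempotentElem, Matrix.mul_assoc, ← Matrix.mul_assoc C, hCGC]
  have hE : Q * (G * C) = 0 := by
    have hE' : IsIdempotentElem (toLinAlgEquiv' (Q * (G * C))) :=
      (hQ.mul_of_commute (hQG.mul_right hQC) hGC).map _
    refine (toLinAlgEquiv' (R := K)).injective ?_
    rw [map_zero]
    refine LinearMap.IsIdempotentElem.eq_zero_of_trace_eq_zero hE' ?_
    change LinearMap.trace K _ (toLin' _) = 0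
    rwa [Matrix.trace_toLin'_eq]
  calc Q * C = C * (Q * (G * C)) := by
        conv_lhs => rw [← hCGC]
        simp only [← Matrix.mul_assoc, hQC.eq]
    _ = 0 := by rw [hE, Matrix.mul_zero]

end SylvesterSum

section DiagonalizableMatrices

variable {n : ℕ}

theorem Diagonalizable.exists_algEquiv_diagonal {M : Matrix (Fin n) (Fin n) ℂ}
    (h : Diagonalizable M) :
    ∃ (e : Matrix (Fin n) (Fin n) ℂ ≃ₐ[ℂ] Matrix (Fin n) (Fin n) ℂ) (d : Fin n → ℂ),
      e (diagonal d) = M := by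
  obtain ⟨P, d, hP, hPM⟩ := h
  let u := ((isUnit_iff_isUnit_det P).mpr hP).unit
  refine ⟨MulSemiringAction.toAlgEquiv ℂ _ (ConjAct.toConjAct u), d, ?_⟩
  rw [MulSemiringAction.toAlgEquiv_apply, ConjAct.units_smul_def, ConjAct.ofConjAct_toConjAct,
    Matrix.coe_units_inv, ← hPM]
  simp [u, Matrix.mul_assoc, Matrix.mul_nonsing_inv _ hP, Matrix.mul_nonsing_inv_cancel_left _ _ hP]

theorem Diagonalizable.isSemisimple {M : Matrix (Fin n) (Fin n) ℂ} (h : Diagonalizable M) :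
    Module.End.IsSemisimple (toLinAlgEquiv' M) := by
  obtain ⟨e, d, rfl⟩ := h.exists_algEquiv_diagonal
  refine Module.End.isSemisimple_of_aeval_prod_X_sub_C_eq_zero (Finset.univ.image d) ?_
  have hd : aeval d (∏ z ∈ Finset.univ.image d, (X - C z)) = 0 := by
    ext i
    simpa [Finset.prod_eq_zero_iff] using ⟨i, sub_self (d i)⟩
  have he : toLinAlgEquiv' (e (diagonal d)) =
      ((toLinAlgEquiv' : _ ≃ₐ[ℂ] _).toAlgHom.comp (e.toAlgHom.comp (diagonalAlgHom ℂ))) d := rfl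
  rw [he, aeval_algHom_apply, hd, map_zero]

-- `d⁻¹` takes `0⁻¹ = 0`, which makes `diagonal d⁻¹` the group inverse of `diagonal d`.
theorem Diagonalizable.exists_isDrazinInverse {M : Matrix (Fin n) (Fin n) ℂ}
    (h : Diagonalizable M) : ∃ G, IsDrazinInverse M G ∧ M * G * M = M := by
  obtain ⟨e, d, rfl⟩ := h.exists_algEquiv_diagonal
  refine ⟨e (diagonal d⁻¹), ⟨⟨1, ?_⟩, ?_, ?_⟩, ?_⟩ <;>
    simp only [← map_pow, ← map_mul, diagonal_pow, diagonal_mul_diagonal] <;>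
    congr 2 <;> funext i <;> simp only [Pi.pow_apply, Pi.inv_apply] <;> grind

theorem IsDrazinInverse.mul_mul_self_of_isSemisimple {S D : Matrix (Fin n) (Fin n) ℂ}
    (hD : IsDrazinInverse S D) (hS : Module.End.IsSemisimple (toLinAlgEquiv' S)) :
    S * D * S = S := by
  obtain ⟨⟨k, hk⟩, hDSD, hSD⟩ := hD
  have hP : IsIdempotentElem (1 - S * D) := by
    refine IsIdempotentElem.one_sub ?_
    rw [IsIdempotentElem, Matrix.mul_assoc, ← Matrix.mul_assoc D, hDSD]
  have hcomm : Commute S (1 - S * D) :=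
    (Commute.one_right S).sub_right ((Commute.refl S).mul_right hSD)
  have hnil : IsNilpotent (S * (1 - S * D)) := by
    refine ⟨k + 1, ?_⟩
    rw [hcomm.mul_pow, hP.pow_succ_eq, Matrix.mul_sub, Matrix.mul_one, ← Matrix.mul_assoc,
      ← pow_succ, pow_succ' S (k + 1), Matrix.mul_assoc, hk, ← pow_succ', sub_self]
  have hss : Module.End.IsSemisimple (toLinAlgEquiv' (S * (1 - S * D))) := by
    rw [map_mul]
    exact hS.mul_of_commute (hcomm.map _)
      (Module.End.isSemisimple_of_isIdempotentElem (hP.map _))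
  have hzero : S * (1 - S * D) = 0 :=
    (toLinAlgEquiv' : Matrix (Fin n) (Fin n) ℂ ≃ₐ[ℂ] _).injective <| by
      rw [map_zero]; exact Module.End.eq_zero_of_isNilpotent_isSemisimple (hnil.map _) hss
  rw [Matrix.mul_sub, Matrix.mul_one, sub_eq_zero] at hzero
  rw [Matrix.mul_assoc, ← hSD]
  exact hzero.symm

theorem isSemisimple_sum_mul_of_diagonalizable {ι : Type*} [Fintype ι]
    {A B : ι → Matrix (Fin n) (Fin n) ℂ}
    (hdA : ∀ j, Diagonalizable (A j)) (hdB : ∀ j, Diagonalizable (B j))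
    (hAA : ∀ i j, Commute (A i) (A j)) (hBB : ∀ i j, Commute (B i) (B j))
    (hAB : ∀ i j, Commute (A i) (B j)) :
    Module.End.IsSemisimple (toLinAlgEquiv' (∑ j, A j * B j)) := by
  rw [map_sum]
  refine Module.End.isSemisimple_sum_of_commute _ _ (fun i _ j _ => ?_) (fun i _ => ?_)
  · exact (((hAA i j).mul_right (hAB i j)).mul_left
      ((hAB j i).symm.mul_right (hBB i j))).map _
  · rw [map_mul]
    exact (hdA i).isSemisimple.mul_of_commute ((hAB i i).map _) (hdB i).isSemisimple


theorem IsDrazinInverse.commute_of_commute {S D M : Matrix (Fin n) (Fin n) ℂ}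
    (hD : IsDrazinInverse S D) (hM : Commute M S) : Commute M D :=
  commute_drazin_of_commute hD.1.choose_spec hD.2.1 hD.2.2 hM

theorem mul_drazin_mul_eq_of_sum_mul_mul_eq {ι : Type*} [Fintype ι]
    {A B : ι → Matrix (Fin n) (Fin n) ℂ} {C D X : Matrix (Fin n) (Fin n) ℂ}
    (hD : IsDrazinInverse (∑ j, A j * B j) D)
    (hSDS : (∑ j, A j * B j) * D * (∑ j, A j * B j) = ∑ j, A j * B j)
    (hdC : Diagonalizable C) (hAB : ∀ j, Commute (A j) (B j))
    (hBS : ∀ j, Commute (B j) (∑ j, A j * B j)) (hCS : Commute C (∑ j, A j * B j))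
    (hBC : ∀ j, Commute (B j) C) (hX : ∑ j, A j * X * B j = C) :
    (∑ j, A j * B j) * D * C = C := by
  set S := ∑ j, A j * B j
  obtain ⟨G, hG, hCGC⟩ := hdC.exists_isDrazinInverse
  have hQ : IsIdempotentElem (1 - S * D) := by
    refine IsIdempotentElem.one_sub ?_
    rw [IsIdempotentElem, ← Matrix.mul_assoc, hSDS]
  have hQS : (1 - S * D) * S = 0 := by rw [Matrix.sub_mul, Matrix.one_mul, hSDS, sub_self]
  have hQcomm : ∀ M, Commute M S → Commute (1 - S * D) M := fun M hM =>
    (Commute.one_left M).sub_left (hM.symm.mul_left (hD.commute_of_commute hM).symm)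
  have hQC := hQcomm C hCS
  have hQG := hG.commute_of_commute hQC
  have hQGB : ∀ j, Commute ((1 - S * D) * G) (B j) := fun j =>
    (hQcomm _ (hBS j)).mul_left (hG.commute_of_commute (hBC j)).symm
  have hQC0 := mul_eq_zero_of_sum_mul_mul_eq hQ hQS hCGC hQC hQG hQGB hAB hX
  rwa [Matrix.sub_mul, Matrix.one_mul, sub_eq_zero, eq_comm] at hQC0

end DiagonalizableMatrices

/-- For a commuting set of diagonalizable matrices, `∑ j, A j * X * B j = C` has a
solution iff `X̂ = (∑ j, A j * B j)^D * C` is a solution. -/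
theorem stmt6 {n k : ℕ} (A B : Fin k → Matrix (Fin n) (Fin n) ℂ)
    (C : Matrix (Fin n) (Fin n) ℂ)
    (hdA : ∀ j, Diagonalizable (A j)) (hdB : ∀ j, Diagonalizable (B j))
    (hdC : Diagonalizable C)
    (hAA : ∀ j l, A j * A l = A l * A j)
    (hBB : ∀ j l, B j * B l = B l * B j)
    (hAB : ∀ j l, A j * B l = B l * A j)
    (hAC : ∀ j, A j * C = C * A j)
    (hBC : ∀ j, B j * C = C * B j)
    (D : Matrix (Fin n) (Fin n) ℂ)
    (hD : IsDrazinInverse (∑ j, A j * B j) D) :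
    (∃ X : Matrix (Fin n) (Fin n) ℂ, ∑ j, A j * X * B j = C) ↔
      ∑ j, A j * (D * C) * B j = C := by
  set S := ∑ j, A j * B j
  have hAS : ∀ j, Commute (A j) S := fun j =>
    Commute.sum_right _ _ _ fun l _ => Commute.mul_right (hAA j l) (hAB j l)
  have hBS : ∀ j, Commute (B j) S := fun j =>
    Commute.sum_right _ _ _ fun l _ => Commute.mul_right (hAB l j).symm (hBB j l)
  have hCS : Commute C S :=
    Commute.sum_right _ _ _ fun l _ => Commute.mul_right (hAC l).symm (hBC l).symm
  have hSDS : S * D * S = S := hD.mul_mul_self_of_isSemisimple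
    (isSemisimple_sum_mul_of_diagonalizable hdA hdB hAA hBB hAB)
  have hDC : ∑ j, A j * (D * C) * B j = S * D * C := by
    rw [sum_mul_mul_eq_mul_sum fun j => (hD.commute_of_commute (hAS j)).mul_right (hAC j),
      Matrix.mul_assoc, hCS.eq, ← Matrix.mul_assoc, hD.2.2.symm]
  rw [hDC]
  exact ⟨fun ⟨X, hX⟩ => mul_drazin_mul_eq_of_sum_mul_mul_eq hD hSDS hdC (fun j => hAB j j)
    hBS hCS hBC hX, fun h => ⟨D * C, hDC.trans h⟩⟩
end

section
/- Let A₁,…,A_k, B₁,…,B_k be simultaneously diagonalized by S with eigenvalue vectors aʲ, bʲ, and let Γ_{rs} = ∑_j aʲ_r bʲ_s. Then the solution set of the homogeneous equation ∑_j A_j X B_j = 0 equals { S Y S⁻¹ : Y ∈ M_n(ℂ), y_{rs} = 0 whenever Γ_{rs} ≠ 0 }, and it is a linear subspace of M_n(ℂ) whose dimension equals the number of pairs (r,s) with Γ_{rs} = 0. -/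
/-!
Conjugation by `S` turns `X ↦ ∑ j, A j * X * B j` into the entrywise (Hadamard) product
`Y ↦ Γ ⊙ Y` with `Γ = ∑ j, vecMulVec (a j) (b j)`. Its kernel is the coordinate subspace of
matrices supported on the zeros of `Γ`, so its dimension is the number of those zeros.
-/

open Matrix

namespace Matrix

variable {ι κ m n R K : Type*} [Fintype ι] [DecidableEq ι] [Fintype κ]

noncomputable def conjLinearEquiv [CommRing R] (S : Matrix ι ι R) (hS : IsUnit S.det) :
    Matrix ι ι R ≃ₗ[R] Matrix ι ι R where
  toFun X := S * X * S⁻¹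
  invFun X := S⁻¹ * X * S
  map_add' X Y := by simp only [Matrix.mul_add, Matrix.add_mul]
  map_smul' c X := by simp only [Matrix.mul_smul, Matrix.smul_mul, RingHom.id_apply]
  left_inv X := by
    simp only [← Matrix.mul_assoc, nonsing_inv_mul _ hS, Matrix.one_mul,
      nonsing_inv_mul_cancel_right _ _ hS]
  right_inv X := by
    simp only [← Matrix.mul_assoc, mul_nonsing_inv _ hS, Matrix.one_mul,
      mul_nonsing_inv_cancel_right _ _ hS]

theorem conjLinearEquiv_apply [CommRing R] (S : Matrix ι ι R) (hS : IsUnit S.det)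
    (X : Matrix ι ι R) : conjLinearEquiv S hS X = S * X * S⁻¹ := rfl

theorem conjLinearEquiv_symm_apply [CommRing R] (S : Matrix ι ι R) (hS : IsUnit S.det)
    (X : Matrix ι ι R) : (conjLinearEquiv S hS).symm X = S⁻¹ * X * S := rfl

theorem sum_diagonal_mul_mul_diagonal_s7 [CommSemiring R] (a b : κ → ι → R) (Y : Matrix ι ι R) :
    ∑ j, diagonal (a j) * Y * diagonal (b j) = (∑ j, vecMulVec (a j) (b j)) ⊙ Y := by
  ext r s
  simp only [sum_apply, diagonal_mul, mul_diagonal, hadamard_apply, vecMulVec_apply,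
    Finset.sum_mul]
  exact Finset.sum_congr rfl fun j _ => by ring

theorem sum_mul_mul_eq_conj_hadamard [CommRing R] {A B : κ → Matrix ι ι R} {S : Matrix ι ι R}
    {a b : κ → ι → R} (hS : IsUnit S.det) (hA : ∀ j, S⁻¹ * A j * S = diagonal (a j))
    (hB : ∀ j, S⁻¹ * B j * S = diagonal (b j)) (X : Matrix ι ι R) :
    ∑ j, A j * X * B j = S * ((∑ j, vecMulVec (a j) (b j)) ⊙ (S⁻¹ * X * S)) * S⁻¹ := by
  rw [← sum_diagonal_mul_mul_diagonal_s7, Finset.mul_sum, Finset.sum_mul]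
  refine Finset.sum_congr rfl fun j _ => ?_
  rw [← hA, ← hB]
  simp only [Matrix.mul_assoc, mul_nonsing_inv_cancel_left _ _ hS, mul_nonsing_inv _ hS,
    Matrix.mul_one]

def hadamardAnnihilator [CommSemiring R] (Γ : Matrix m n R) : Submodule R (Matrix m n R) where
  carrier := {Y | Γ ⊙ Y = 0}
  add_mem' hX hY := by simp_all only [Set.mem_ofPred_eq, hadamard_add, add_zero]
  zero_mem' := hadamard_zero Γ
  smul_mem' c Y hY := by simp_all only [Set.mem_ofPred_eq, hadamard_smul, smul_zero]

theorem mem_hadamardAnnihilator_iff_hadamard_eq_zero [CommSemiring R] {Γ Y : Matrix m n R} :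
    Y ∈ hadamardAnnihilator Γ ↔ Γ ⊙ Y = 0 := Iff.rfl

theorem mem_hadamardAnnihilator [CommSemiring R] [NoZeroDivisors R] {Γ Y : Matrix m n R} :
    Y ∈ hadamardAnnihilator Γ ↔ ∀ i j, Γ i j ≠ 0 → Y i j = 0 := by
  simp only [mem_hadamardAnnihilator_iff_hadamard_eq_zero, ← Matrix.ext_iff, hadamard_apply,
    zero_apply, mul_eq_zero]
  exact forall₂_congr fun i j => or_iff_not_imp_left

theorem hadamardAnnihilator_eq_map_curry [CommSemiring R] [NoZeroDivisors R] (Γ : Matrix m n R) :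
    hadamardAnnihilator Γ = (⨅ p ∈ {p : m × n | Γ p.1 p.2 = 0}ᶜ,
      LinearMap.ker (LinearMap.proj p : (m × n → R) →ₗ[R] R)).map
        ((LinearEquiv.curry R R m n).trans (ofLinearEquiv R)).toLinearMap := by
  ext Y
  simp [mem_hadamardAnnihilator, Submodule.mem_map_equiv]

theorem finrank_hadamardAnnihilator [Fintype m] [Fintype n] [Field K] (Γ : Matrix m n K) :
    Module.finrank K (hadamardAnnihilator Γ) = {p : m × n | Γ p.1 p.2 = 0}.ncard := by
  classical
  rw [hadamardAnnihilator_eq_map_curry, LinearEquiv.finrank_map_eq,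
    (LinearMap.iInfKerProjEquiv K (fun _ => K) disjoint_compl_right
      (Set.union_compl_self _).ge).finrank_eq, Module.finrank_fintype_fun_eq_card,
    ← Nat.card_coe_set_eq, Nat.card_eq_fintype_card]

end Matrix

/-- The solution set of the homogeneous equation `∑ j, A j * X * B j = 0` equals
`{S Y S⁻¹ : Y_{rs} = 0 whenever Γ_{rs} ≠ 0}`; it is a linear subspace whose
dimension equals the number of pairs `(r,s)` with `Γ_{rs} = 0`. -/
theorem stmt7 {n k : ℕ} (A B : Fin k → Matrix (Fin n) (Fin n) ℂ)
    (S : Matrix (Fin n) (Fin n) ℂ)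
    (a b : Fin k → Fin n → ℂ)
    (hS : IsUnit S.det)
    (hA : ∀ j, S⁻¹ * A j * S = Matrix.diagonal (a j))
    (hB : ∀ j, S⁻¹ * B j * S = Matrix.diagonal (b j)) :
    (∀ X : Matrix (Fin n) (Fin n) ℂ,
        (∑ j, A j * X * B j = 0) ↔
          ∃ Y : Matrix (Fin n) (Fin n) ℂ,
            (∀ r s, (∑ j, a j r * b j s) ≠ 0 → Y r s = 0) ∧ X = S * Y * S⁻¹) ∧
    ∃ W : Submodule ℂ (Matrix (Fin n) (Fin n) ℂ),
      (∀ X, X ∈ W ↔ ∑ j, A j * X * B j = 0) ∧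
      Module.finrank ℂ W =
        Set.ncard {p : Fin n × Fin n | (∑ j, a j p.1 * b j p.2) = 0} := by
  set Γ := ∑ j, vecMulVec (a j) (b j)
  have hΓ : ∀ r s, Γ r s = ∑ j, a j r * b j s := fun r s => by
    simp only [Γ, Matrix.sum_apply, vecMulVec_apply]
  have hsol : ∀ X, X ∈ (hadamardAnnihilator Γ).map (conjLinearEquiv S hS).toLinearMap ↔
      ∑ j, A j * X * B j = 0 := fun X => by
    rw [Submodule.mem_map_equiv, sum_mul_mul_eq_conj_hadamard hS hA hB,
      conjLinearEquiv_symm_apply, ← conjLinearEquiv_apply S hS, LinearEquiv.map_eq_zero_iff,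
      mem_hadamardAnnihilator_iff_hadamard_eq_zero]
  refine ⟨fun X => ?_, _, hsol, ?_⟩
  · simp only [← hsol, Submodule.mem_map, mem_hadamardAnnihilator, hΓ, conjLinearEquiv_apply,
      eq_comm (a := X), LinearEquiv.coe_coe]
  · simp only [LinearEquiv.finrank_map_eq, finrank_hadamardAnnihilator, hΓ]
end

section
/- Let {A₁,…,A_k, B₁,…,B_k, C} be a commuting set of diagonalizable n×n matrices with C invertible. Then the equation ∑_j A_j X B_j = C has a solution if and only if ∑_j A_j B_j is invertible. -/
open Matrix

lemma mem_max_iff {n : ℕ} (M : Matrix (Fin n) (Fin n) ℂ) (μ : ℂ) (x : Fin n → ℂ) :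
    x ∈ Module.End.maxGenEigenspace (Matrix.toLinAlgEquiv' M) μ ↔
      ∃ m : ℕ, ((M - μ • 1) ^ m) *ᵥ x = 0 := by
  rw [Module.End.mem_maxGenEigenspace]
  have key : ∀ m : ℕ, ((Matrix.toLinAlgEquiv' M - μ • (1 : Module.End ℂ (Fin n → ℂ))) ^ m) x
      = ((M - μ • 1) ^ m) *ᵥ x := by
    intro m
    have h1 : (Matrix.toLinAlgEquiv' M - μ • (1 : Module.End ℂ (Fin n → ℂ)))
        = Matrix.toLinAlgEquiv' (M - μ • 1) := by
      simp [map_sub, _root_.map_smul, _root_.map_one]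
    rw [h1, ← map_pow, Matrix.toLinAlgEquiv'_apply]
  simp_rw [key]

lemma conj_eq {n : ℕ} {M S : Matrix (Fin n) (Fin n) ℂ} {d : Fin n → ℂ}
    (hS : IsUnit S.det) (hSd : S⁻¹ * M * S = Matrix.diagonal d) :
    M = S * Matrix.diagonal d * S⁻¹ := by
  rw [← hSd]
  calc M = (S * S⁻¹) * M * (S * S⁻¹) := by
        rw [Matrix.mul_nonsing_inv S hS, one_mul, mul_one]
    _ = S * (S⁻¹ * M * S) * S⁻¹ := by noncomm_ring

lemma eig_of_mem {n : ℕ} {M : Matrix (Fin n) (Fin n) ℂ} (hd : Diagonalizable M)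
    {μ : ℂ} {x : Fin n → ℂ} (hx : x ∈ Module.End.maxGenEigenspace (Matrix.toLinAlgEquiv' M) μ) :
    M *ᵥ x = μ • x := by
  obtain ⟨S, d, hS, hSd⟩ := hd
  have hM : M = S * Matrix.diagonal d * S⁻¹ := conj_eq hS hSd
  obtain ⟨m, hm⟩ := (mem_max_iff M μ x).mp hx
  set e : Fin n → ℂ := fun i => d i - μ with he
  have hsub : M - μ • 1 = S * Matrix.diagonal e * S⁻¹ := by
    have h2 : Matrix.diagonal e = Matrix.diagonal d - μ • 1 := by
      rw [Matrix.smul_one_eq_diagonal, Matrix.diagonal_sub]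
    have h3 : S * Matrix.diagonal e * S⁻¹
        = S * Matrix.diagonal d * S⁻¹ - S * (μ • 1) * S⁻¹ := by
      rw [h2, Matrix.mul_sub, Matrix.sub_mul]
    rw [h3, ← hM, Matrix.mul_smul, mul_one, Matrix.smul_mul, Matrix.mul_nonsing_inv S hS]
  obtain ⟨u, hu⟩ := (Matrix.isUnit_iff_isUnit_det S).mpr hS
  have hinv : S⁻¹ = (↑u⁻¹ : Matrix (Fin n) (Fin n) ℂ) := by
    rw [Matrix.coe_units_inv, hu]
  have hpow : (M - μ • 1) ^ m = S * Matrix.diagonal (e ^ m) * S⁻¹ := by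
    rw [hsub, ← Matrix.diagonal_pow, hinv, ← hu]
    exact Units.conj_pow u (Matrix.diagonal e) m
  set y : Fin n → ℂ := S⁻¹ *ᵥ x with hy
  have h0 : Matrix.diagonal (e ^ m) *ᵥ y = 0 := by
    have h3 := congrArg (fun z => S⁻¹ *ᵥ z) hm
    simp only [Matrix.mulVec_zero] at h3
    rw [hpow, Matrix.mulVec_mulVec, ← Matrix.mul_assoc, ← Matrix.mul_assoc,
      Matrix.nonsing_inv_mul S hS, one_mul, ← Matrix.mulVec_mulVec] at h3
    exact h3
  have hey : ∀ i, e i * y i = 0 := by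
    intro i
    have h4 : (e i) ^ m * y i = 0 := by
      have := congrFun h0 i
      rwa [Matrix.mulVec_diagonal, Pi.pow_apply] at this
    rcases mul_eq_zero.mp h4 with h5 | h5
    · rcases pow_eq_zero_iff'.mp h5 with ⟨h6, -⟩
      rw [h6, zero_mul]
    · rw [h5, mul_zero]
  have hDy : Matrix.diagonal d *ᵥ y = μ • y := by
    funext i
    have := hey i
    rw [he] at this
    have h7 : d i * y i = μ * y i := by
      have := sub_mul (d i) μ (y i) ▸ this
      linear_combination this
    simp [Matrix.mulVec_diagonal, h7]
  have hSy : S *ᵥ y = x := by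
    rw [hy, Matrix.mulVec_mulVec, Matrix.mul_nonsing_inv S hS, Matrix.one_mulVec]
  rw [hM, ← Matrix.mulVec_mulVec, ← Matrix.mulVec_mulVec, ← hy, hDy,
    Matrix.mulVec_smul, hSy]

lemma sup_top {n : ℕ} {M : Matrix (Fin n) (Fin n) ℂ} (hd : Diagonalizable M) :
    ⨆ μ : ℂ, Module.End.maxGenEigenspace (Matrix.toLinAlgEquiv' M) μ = ⊤ := by
  obtain ⟨S, d, hS, hSd⟩ := hd
  have hMS : M * S = S * Matrix.diagonal d := by
    conv_lhs => rw [conj_eq hS hSd]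
    rw [Matrix.mul_assoc, Matrix.nonsing_inv_mul S hS, mul_one]
  rw [eq_top_iff]
  intro x _
  set y : Fin n → ℂ := S⁻¹ *ᵥ x with hy
  have hSy : S *ᵥ y = x := by
    rw [hy, Matrix.mulVec_mulVec, Matrix.mul_nonsing_inv S hS, Matrix.one_mulVec]
  have hx : x = ∑ i, S *ᵥ Pi.single i (y i) := by
    have h8 : y = ∑ i, Pi.single i (y i) := (Finset.univ_sum_single y).symm
    calc x = S *ᵥ y := hSy.symm
    _ = S.mulVecLin (∑ i, Pi.single i (y i)) := by rw [← h8]; rfl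
    _ = ∑ i, S *ᵥ Pi.single i (y i) := by rw [map_sum]; rfl
  rw [hx]
  refine Submodule.sum_mem _ fun i _ => ?_
  refine Submodule.mem_iSup_of_mem (d i) ?_
  rw [Module.End.mem_maxGenEigenspace]
  refine ⟨1, ?_⟩
  have hdiag : Matrix.diagonal d *ᵥ Pi.single i (y i) = d i • (Pi.single i (y i) : Fin n → ℂ) := by
    funext j
    rw [Matrix.mulVec_diagonal]
    by_cases h : j = i
    · subst h; simp
    · simp [Pi.single_apply, h]
  have hMv : M *ᵥ (S *ᵥ Pi.single i (y i)) = d i • (S *ᵥ Pi.single i (y i)) := by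
    rw [Matrix.mulVec_mulVec, hMS, ← Matrix.mulVec_mulVec, hdiag, Matrix.mulVec_smul]
  rw [pow_one, LinearMap.sub_apply, LinearMap.smul_apply, Module.End.one_apply,
    Matrix.toLinAlgEquiv'_apply, hMv, sub_self]

lemma sum_mulVec' {n : ℕ} {ι : Type*} (s : Finset ι) (M : ι → Matrix (Fin n) (Fin n) ℂ)
    (v : Fin n → ℂ) : (∑ j ∈ s, M j) *ᵥ v = ∑ j ∈ s, M j *ᵥ v := by
  simp only [← Matrix.toLinAlgEquiv'_apply, map_sum, LinearMap.sum_apply]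

lemma mulVec_sum' {n : ℕ} {ι : Type*} (M : Matrix (Fin n) (Fin n) ℂ) (s : Finset ι)
    (g : ι → (Fin n → ℂ)) : M *ᵥ (∑ a ∈ s, g a) = ∑ a ∈ s, M *ᵥ g a :=
  map_sum M.mulVecLin g s

/-- For a commuting set of diagonalizable matrices with `C` invertible,
`∑ j, A j * X * B j = C` has a solution iff `∑ j, A j * B j` is invertible. -/
theorem stmt8 {n k : ℕ} (A B : Fin k → Matrix (Fin n) (Fin n) ℂ)
    (C : Matrix (Fin n) (Fin n) ℂ)
    (hdA : ∀ j, Diagonalizable (A j)) (hdB : ∀ j, Diagonalizable (B j))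
    (hdC : Diagonalizable C)
    (hAA : ∀ j l, A j * A l = A l * A j)
    (hBB : ∀ j l, B j * B l = B l * B j)
    (hAB : ∀ j l, A j * B l = B l * A j)
    (hAC : ∀ j, A j * C = C * A j)
    (hBC : ∀ j, B j * C = C * B j)
    (hC : IsUnit C) :
    (∃ X : Matrix (Fin n) (Fin n) ℂ, ∑ j, A j * X * B j = C) ↔
      IsUnit (∑ j, A j * B j) := by
  classical
  constructor
  · rintro ⟨X, hX⟩
    set ι := Option (Fin k ⊕ Fin k) with hι
    set mat : ι → Matrix (Fin n) (Fin n) ℂ := fun i => i.elim C (Sum.elim A B) with hmat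
    set f : ι → Module.End ℂ (Fin n → ℂ) := fun i => Matrix.toLinAlgEquiv' (mat i) with hf
    have hmatcomm : ∀ i j, mat i * mat j = mat j * mat i := by
      rintro (_ | (a | a)) (_ | (b | b))
      · rfl
      · exact (hAC b).symm
      · exact (hBC b).symm
      · exact hAC a
      · exact hAA a b
      · exact hAB a b
      · exact hBC a
      · exact (hAB b a).symm
      · exact hBB a b
    have hcomm : ∀ i j, Commute (f i) (f j) := by
      intro i j
      show f i * f j = f j * f i
      rw [hf]
      rw [← _root_.map_mul, ← _root_.map_mul, hmatcomm i j]
    have hdiag : ∀ i, Diagonalizable (mat i) := by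
      rintro (_ | (a | a))
      exacts [hdC, hdA a, hdB a]
    have hspan :=
      Module.End.iSup_iInf_maxGenEigenspace_eq_top_of_iSup_maxGenEigenspace_eq_top_of_commute f
        (fun i j _ => hcomm i j) (fun i => sup_top (hdiag i))
    have hind := Module.End.independent_iInf_maxGenEigenspace_of_forall_mapsTo f
      (fun i j μ => Module.End.mapsTo_maxGenEigenspace_of_comm (hcomm j i) μ)
    set V : (ι → ℂ) → Submodule ℂ (Fin n → ℂ) :=
      fun χ => ⨅ i, Module.End.maxGenEigenspace (f i) (χ i) with hV
    have heig : ∀ (χ : ι → ℂ) (x : Fin n → ℂ), x ∈ V χ → ∀ i, mat i *ᵥ x = χ i • x :=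
      fun χ x hx i => eig_of_mem (hdiag i) ((Submodule.mem_iInf _).mp hx i)
    have heigA : ∀ (χ : ι → ℂ) (x : Fin n → ℂ), x ∈ V χ →
        ∀ j, A j *ᵥ x = χ (some (Sum.inl j)) • x :=
      fun χ x hx j => heig χ x hx (some (Sum.inl j))
    have heigB : ∀ (χ : ι → ℂ) (x : Fin n → ℂ), x ∈ V χ →
        ∀ j, B j *ᵥ x = χ (some (Sum.inr j)) • x :=
      fun χ x hx j => heig χ x hx (some (Sum.inr j))
    -- key claim
    have hkey : ∀ χ : ι → ℂ, V χ ≠ ⊥ →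
        (∑ j, χ (some (Sum.inl j)) * χ (some (Sum.inr j))) ≠ 0 := by
      intro χ hb hσ0
      obtain ⟨v, hv, hv0⟩ := Submodule.exists_mem_ne_zero_of_ne_bot hb
      have hCv : C *ᵥ v = χ none • v := heig χ v hv none
      have hγ : χ none ≠ 0 := by
        intro h0
        apply hv0
        have hz : C *ᵥ v = 0 := by rw [hCv, h0, zero_smul]
        have hCd := (Matrix.isUnit_iff_isUnit_det C).mp hC
        calc v = (C⁻¹ * C) *ᵥ v := by rw [Matrix.nonsing_inv_mul C hCd, Matrix.one_mulVec]
          _ = C⁻¹ *ᵥ (C *ᵥ v) := (Matrix.mulVec_mulVec _ _ _).symm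
          _ = 0 := by rw [hz, Matrix.mulVec_zero]
      obtain ⟨w, hwmem, hwsum⟩ :=
        (Submodule.mem_iSup_iff_exists_finsupp V (X *ᵥ v)).mp (hspan ▸ Submodule.mem_top)
      have hCv2 : C *ᵥ v = ∑ j, χ (some (Sum.inr j)) • (A j *ᵥ (X *ᵥ v)) := by
        conv_lhs => rw [← hX]
        rw [sum_mulVec']
        refine Finset.sum_congr rfl fun j _ => ?_
        rw [← Matrix.mulVec_mulVec, ← Matrix.mulVec_mulVec,
          heigB χ v hv j, Matrix.mulVec_smul, Matrix.mulVec_smul]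
      have hAu : ∀ j, A j *ᵥ (X *ᵥ v)
          = ∑ χ' ∈ w.support, χ' (some (Sum.inl j)) • w χ' := by
        intro j
        conv_lhs => rw [← hwsum]
        rw [Finsupp.sum, mulVec_sum']
        exact Finset.sum_congr rfl fun χ' _ => heigA χ' (w χ') (hwmem χ') j
      have hfinal : χ none • v = ∑ χ' ∈ w.support,
          (∑ j, χ (some (Sum.inr j)) * χ' (some (Sum.inl j))) • w χ' := by
        rw [← hCv, hCv2]
        simp_rw [hAu, Finset.smul_sum]
        rw [Finset.sum_comm]
        refine Finset.sum_congr rfl fun χ' _ => ?_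
        simp_rw [smul_smul]
        exact (Finset.sum_smul).symm
      have hmem : χ none • v ∈ V χ ⊓ (⨆ (χ' : ι → ℂ) (_ : χ' ≠ χ), V χ') := by
        refine ⟨Submodule.smul_mem _ _ hv, ?_⟩
        rw [hfinal]
        refine Submodule.sum_mem _ fun χ' _ => ?_
        by_cases hc : χ' = χ
        · rw [hc]
          have hz : (∑ j, χ (some (Sum.inr j)) * χ (some (Sum.inl j))) = 0 := by
            rw [← hσ0]
            exact Finset.sum_congr rfl fun j _ => mul_comm _ _
          rw [hz, zero_smul]
          exact Submodule.zero_mem _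
        · exact Submodule.mem_iSup_of_mem χ'
            (Submodule.mem_iSup_of_mem hc (Submodule.smul_mem _ _ (hwmem χ')))
      have h0 : χ none • v = 0 := (Submodule.mem_bot ℂ).mp ((hind χ).le_bot hmem)
      exact hv0 (by simpa [smul_eq_zero, hγ] using h0)
    -- surjectivity
    rw [← Matrix.mulVec_surjective_iff_isUnit]
    have hle : ∀ χ : ι → ℂ, V χ ≤ LinearMap.range (Matrix.mulVecLin (∑ j, A j * B j)) := by
      intro χ
      by_cases hb : V χ = ⊥
      · rw [hb]; exact bot_le
      · set σ : ℂ := ∑ j, χ (some (Sum.inl j)) * χ (some (Sum.inr j)) with hσ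
        have hσ0 := hkey χ hb
        intro x hx
        have hSx : (∑ j, A j * B j) *ᵥ x = σ • x := by
          rw [sum_mulVec']
          have : ∀ j, (A j * B j) *ᵥ x
              = (χ (some (Sum.inl j)) * χ (some (Sum.inr j))) • x := by
            intro j
            rw [← Matrix.mulVec_mulVec, heigB χ x hx j, Matrix.mulVec_smul,
              heigA χ x hx j, smul_smul, mul_comm]
          simp_rw [this]
          exact (Finset.sum_smul).symm
        refine ⟨σ⁻¹ • x, ?_⟩
        rw [Matrix.mulVecLin_apply, Matrix.mulVec_smul, hSx, smul_smul,
          inv_mul_cancel₀ hσ0, one_smul]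
    have hrange : LinearMap.range (Matrix.mulVecLin (∑ j, A j * B j)) = ⊤ :=
      top_unique (hspan ▸ iSup_le hle)
    intro x
    obtain ⟨y, hy⟩ := (LinearMap.range_eq_top.mp hrange) x
    exact ⟨y, hy⟩
  · intro hS
    have hd := (Matrix.isUnit_iff_isUnit_det _).mp hS
    set S := ∑ j, A j * B j with hSdef
    have hBS : ∀ j, B j * S = S * B j := by
      intro j
      rw [hSdef, Finset.mul_sum, Finset.sum_mul]
      refine Finset.sum_congr rfl fun l _ => ?_
      calc B j * (A l * B l) = (B j * A l) * B l := by rw [mul_assoc]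
        _ = (A l * B j) * B l := by rw [← hAB l j]
        _ = A l * (B j * B l) := by rw [mul_assoc]
        _ = A l * (B l * B j) := by rw [hBB j l]
        _ = A l * B l * B j := by rw [mul_assoc]
    have hBSinv : ∀ j, B j * S⁻¹ = S⁻¹ * B j := by
      intro j
      calc B j * S⁻¹ = S⁻¹ * (S * (B j * S⁻¹)) := by
            rw [Matrix.nonsing_inv_mul_cancel_left _ _ hd]
        _ = S⁻¹ * ((S * B j) * S⁻¹) := by rw [mul_assoc S (B j) S⁻¹]
        _ = S⁻¹ * ((B j * S) * S⁻¹) := by rw [hBS]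
        _ = S⁻¹ * (B j * (S * S⁻¹)) := by rw [mul_assoc (B j) S S⁻¹]
        _ = S⁻¹ * B j := by rw [Matrix.mul_nonsing_inv _ hd, mul_one]
    refine ⟨S⁻¹ * C, ?_⟩
    have hterm : ∀ j, A j * (S⁻¹ * C) * B j = (A j * B j) * (S⁻¹ * C) := by
      intro j
      calc A j * (S⁻¹ * C) * B j = A j * (S⁻¹ * (C * B j)) := by
            rw [mul_assoc, mul_assoc]
        _ = A j * (S⁻¹ * (B j * C)) := by rw [← hBC]
        _ = A j * ((S⁻¹ * B j) * C) := by rw [mul_assoc]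
        _ = A j * ((B j * S⁻¹) * C) := by rw [hBSinv]
        _ = (A j * B j) * (S⁻¹ * C) := by
            rw [mul_assoc, mul_assoc]
    simp_rw [hterm]
    rw [← Finset.sum_mul, ← hSdef, ← mul_assoc, Matrix.mul_nonsing_inv _ hd, one_mul]
end

section
/- Let {A, B, C} be a commuting set of diagonalizable n×n complex matrices. Then the Sylvester equation AX + XB = C has a solution if and only if X̂ = (A+B)^D C is a solution, which holds if and only if the equation (A+B)X = C has a solution. -/
open Matrix

namespace SylAux


variable {n : ℕ}

/-- anything commuting with M commutes with aeval M p -/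
lemma comm_aeval {X M : Matrix (Fin n) (Fin n) ℂ} (h : X * M = M * X) (p : Polynomial ℂ) :
    X * (Polynomial.aeval M p) = (Polynomial.aeval M p) * X := by
  have hc : Commute X M := h
  rw [Polynomial.aeval_eq_sum_range, Finset.mul_sum, Finset.sum_mul]
  refine Finset.sum_congr rfl fun i _ => ?_
  rw [mul_smul_comm, smul_mul_assoc, (hc.pow_right i).eq]

lemma conj_mul_conj {R : Type*} [Monoid R] {s t : R} (hst : s * t = 1) (P Q : R) :
    (t * P * s) * (t * Q * s) = t * (P * Q) * s := by
  have h : ∀ X : R, s * (t * X) = X := fun X => by rw [← mul_assoc, hst, one_mul]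
  simp only [mul_assoc, h]

/-- conjugation of aeval -/
lemma aeval_conj {S N : Matrix (Fin n) (Fin n) ℂ} (hS : IsUnit S.det) (p : Polynomial ℂ) :
    Polynomial.aeval (S * N * S⁻¹) p = S * Polynomial.aeval N p * S⁻¹ := by
  have h1 : S * S⁻¹ = 1 := Matrix.mul_nonsing_inv S hS
  have h2 : S⁻¹ * S = 1 := Matrix.nonsing_inv_mul S hS
  have hpow : ∀ i : ℕ, (S * N * S⁻¹) ^ i = S * N ^ i * S⁻¹ := by
    intro i; induction i with
    | zero => simp [h1]
    | succ i ih =>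
        rw [pow_succ, pow_succ, ih, conj_mul_conj h2]
  rw [Polynomial.aeval_eq_sum_range, Polynomial.aeval_eq_sum_range, Finset.mul_sum,
    Finset.sum_mul]
  refine Finset.sum_congr rfl fun i _ => ?_
  rw [hpow, mul_smul_comm, smul_mul_assoc]

lemma aeval_diagonal (d : Fin n → ℂ) (p : Polynomial ℂ) :
    Polynomial.aeval (Matrix.diagonal d) p
      = Matrix.diagonal (fun i => Polynomial.eval (d i) p) := by
  have h := Polynomial.aeval_algHom_apply (Matrix.diagonalAlgHom (n := Fin n) (α := ℂ) ℂ) d p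
  simp only [Matrix.diagonalAlgHom_apply] at h
  have hfun : (Polynomial.aeval d) p = fun i => Polynomial.eval (d i) p := by
    funext i
    have h2 := Polynomial.aeval_algHom_apply (Pi.evalAlgHom ℂ (fun _ : Fin n => ℂ) i) d p
    simp only [Pi.evalAlgHom_apply] at h2
    rw [← h2, Polynomial.aeval_def, Polynomial.eval₂_eq_eval_map, Algebra.algebraMap_self, Polynomial.map_id]
  rw [h, hfun]

/-- commutator lemma: a commutator with diagonalizable B that commutes with B vanishes -/
lemma commutator_eq_zero {B W Y : Matrix (Fin n) (Fin n) ℂ} (hdB : Diagonalizable B)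
    (hW : W = Y * B - B * Y) (hWB : W * B = B * W) : W = 0 := by
  obtain ⟨S, d, hS, hdiag⟩ := hdB
  have h1 : S * S⁻¹ = 1 := Matrix.mul_nonsing_inv S hS
  have h2 : S⁻¹ * S = 1 := Matrix.nonsing_inv_mul S hS
  set W' := S⁻¹ * W * S with hW'def
  set Y' := S⁻¹ * Y * S with hY'def
  have hconj : ∀ P Q : Matrix (Fin n) (Fin n) ℂ,
      (S⁻¹ * P * S) * (S⁻¹ * Q * S) = S⁻¹ * (P * Q) * S := fun P Q => conj_mul_conj h1 P Q
  have hWd : W' = Y' * Matrix.diagonal d - Matrix.diagonal d * Y' := by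
    rw [← hdiag, hY'def, hconj, hconj, hW'def, hW, mul_sub, sub_mul]
  have hWBd : W' * Matrix.diagonal d = Matrix.diagonal d * W' := by
    rw [← hdiag, hW'def, hconj, hconj, hWB]
  have hzero : W' = 0 := by
    ext i j
    have e1 : W' i j = Y' i j * d j - d i * Y' i j := by
      rw [hWd]; simp [Matrix.sub_apply, Matrix.mul_diagonal, Matrix.diagonal_mul]
    have e2 : W' i j * d j = d i * W' i j := by
      have := congrFun (congrFun hWBd i) j
      simpa [Matrix.mul_diagonal, Matrix.diagonal_mul] using this
    by_cases hij : d i = d j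
    · rw [Matrix.zero_apply, e1, hij]; ring
    · have hne : d j - d i ≠ 0 := sub_ne_zero.mpr (Ne.symm hij)
      have : W' i j * (d j - d i) = 0 := by linear_combination e2
      rcases mul_eq_zero.mp this with h | h
      · simpa using h
      · exact absurd h hne
  have : W = S * W' * S⁻¹ := by
    rw [hW'def, ← Matrix.mul_assoc, ← Matrix.mul_assoc, h1, Matrix.one_mul, Matrix.mul_assoc,
      h1, Matrix.mul_one]
  rw [this, hzero, Matrix.mul_zero, Matrix.zero_mul]

/-- From squarefree μ, a polynomial p with μ ∣ X (X p - 1). -/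
lemma exists_poly_of_squarefree (μ : Polynomial ℂ) (hsq : Squarefree μ) :
    ∃ p : Polynomial ℂ, μ ∣ Polynomial.X * (Polynomial.X * p - 1) := by
  by_cases hX : (Polynomial.X : Polynomial ℂ) ∣ μ
  · obtain ⟨q, hq⟩ := hX
    have hcop : IsCoprime (Polynomial.X : Polynomial ℂ) q := by
      rw [Polynomial.irreducible_X.coprime_iff_not_dvd]
      intro hdvd
      obtain ⟨r, hr⟩ := hdvd
      exact Polynomial.not_isUnit_X
        (hsq Polynomial.X ⟨r, by rw [hq, hr]; ring⟩)
    obtain ⟨u, v, huv⟩ := hcop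
    exact ⟨u, ⟨-v, by rw [hq]; linear_combination (Polynomial.X : Polynomial ℂ) * huv⟩⟩
  · have hcop : IsCoprime (Polynomial.X : Polynomial ℂ) μ :=
      Polynomial.irreducible_X.coprime_iff_not_dvd.mpr hX
    obtain ⟨u, v, huv⟩ := hcop
    exact ⟨u, ⟨-(Polynomial.X * v), by linear_combination (Polynomial.X : Polynomial ℂ) * huv⟩⟩

/-- group-inverse-ish element as a polynomial in M -/
lemma exists_E (M : Matrix (Fin n) (Fin n) ℂ) (hsq : Squarefree (minpoly ℂ M)) :
    ∃ E : Matrix (Fin n) (Fin n) ℂ, M * M * E = M ∧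
      ∀ X : Matrix (Fin n) (Fin n) ℂ, X * M = M * X → X * E = E * X := by
  obtain ⟨p, hp⟩ := exists_poly_of_squarefree _ hsq
  refine ⟨Polynomial.aeval M p, ?_, fun X h => comm_aeval h p⟩
  obtain ⟨c, hc⟩ := hp
  have h0 : Polynomial.aeval M (Polynomial.X * (Polynomial.X * p - 1)) = 0 := by
    rw [hc, _root_.map_mul, minpoly.aeval, zero_mul]
  rw [_root_.map_mul, _root_.map_sub, _root_.map_mul, _root_.map_one, Polynomial.aeval_X] at h0
  rw [mul_sub, mul_one, sub_eq_zero] at h0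
  rw [mul_assoc, h0]

lemma isSemisimple_of_diag {A : Matrix (Fin n) (Fin n) ℂ} (hdA : Diagonalizable A) :
    Module.End.IsSemisimple (Matrix.toLinAlgEquiv' A) := by
  obtain ⟨S, d, hS, hdiag⟩ := hdA
  have h1 : S * S⁻¹ = 1 := Matrix.mul_nonsing_inv S hS
  have hA : A = S * Matrix.diagonal d * S⁻¹ := by
    rw [← hdiag, ← Matrix.mul_assoc, ← Matrix.mul_assoc, h1, Matrix.one_mul, Matrix.mul_assoc,
      h1, Matrix.mul_one]
  set f : Polynomial ℂ :=
    ∏ c ∈ Finset.image d Finset.univ, (Polynomial.X - Polynomial.C (id c)) with hf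
  have hsep : f.Separable :=
    Polynomial.separable_prod_X_sub_C_iff'.mpr (fun x _ y _ h => h)
  have haevalA : Polynomial.aeval A f = 0 := by
    rw [hA, aeval_conj hS, aeval_diagonal]
    have : (fun i => Polynomial.eval (d i) f) = fun _ => (0 : ℂ) := by
      funext i
      rw [hf, Polynomial.eval_prod]
      refine Finset.prod_eq_zero (Finset.mem_image_of_mem d (Finset.mem_univ i)) ?_
      simp
    rw [this]
    simp
  have haeval : Polynomial.aeval (Matrix.toLinAlgEquiv' A) f = 0 := by
    rw [Polynomial.aeval_algHom_apply (Matrix.toLinAlgEquiv' :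
      Matrix (Fin n) (Fin n) ℂ ≃ₐ[ℂ] _) A f, haevalA, map_zero]
  exact Module.End.isSemisimple_of_squarefree_aeval_eq_zero hsep.squarefree haeval

lemma squarefree_minpoly_add {A B : Matrix (Fin n) (Fin n) ℂ} (hdA : Diagonalizable A)
    (hdB : Diagonalizable B) (hAB : A * B = B * A) : Squarefree (minpoly ℂ (A + B)) := by
  have ssA := isSemisimple_of_diag hdA
  have ssB := isSemisimple_of_diag hdB
  have comm : Commute (Matrix.toLinAlgEquiv' A) (Matrix.toLinAlgEquiv' B) := by
    show _ * _ = _ * _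
    rw [← _root_.map_mul, ← _root_.map_mul, hAB]
  have ssM := Module.End.IsSemisimple.add_of_commute comm ssA ssB
  have h := ssM.minpoly_squarefree
  rwa [← _root_.map_add, minpoly.algEquiv_eq] at h

lemma sandwich {R : Type*} [Ring R] {M E X : R} (hXM : X * M = M * X)
    (hXE : X * E = E * X) : X * (M * E * E) = M * E * E * X := by
  calc X * (M * E * E) = (X * M) * (E * E) := by noncomm_ring
    _ = (M * X) * (E * E) := by rw [hXM]
    _ = M * ((X * E) * E) := by noncomm_ring
    _ = M * ((E * X) * E) := by rw [hXE]
    _ = (M * E) * (X * E) := by noncomm_ring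
    _ = (M * E) * (E * X) := by rw [hXE]
    _ = M * E * E * X := by noncomm_ring

lemma swapME {R : Type*} [Ring R] {M E X : R} (hXM : X * M = M * X)
    (hXE : X * E = E * X) : M * E * X = X * (M * E) := by
  calc M * E * X = M * (E * X) := by noncomm_ring
    _ = M * (X * E) := by rw [hXE]
    _ = (M * X) * E := by noncomm_ring
    _ = (X * M) * E := by rw [hXM]
    _ = X * (M * E) := by noncomm_ring

end SylAux

open SylAux in
/-- For a commuting set `{A,B,C}` of diagonalizable matrices, the Sylvester
equation `AX + XB = C` is consistent iff `X̂ = (A+B)^D C` is a solution, iff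
`(A+B)X = C` is consistent. -/
theorem stmt10 {n : ℕ} (A B C : Matrix (Fin n) (Fin n) ℂ)
    (hdA : Diagonalizable A) (hdB : Diagonalizable B) (hdC : Diagonalizable C)
    (hAB : A * B = B * A) (hAC : A * C = C * A) (hBC : B * C = C * B)
    (D : Matrix (Fin n) (Fin n) ℂ) (hD : IsDrazinInverse (A + B) D) :
    ((∃ X : Matrix (Fin n) (Fin n) ℂ, A * X + X * B = C) ↔
        A * (D * C) + (D * C) * B = C) ∧
    ((∃ X : Matrix (Fin n) (Fin n) ℂ, A * X + X * B = C) ↔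
        ∃ X : Matrix (Fin n) (Fin n) ℂ, (A + B) * X = C) := by
  obtain ⟨⟨k, hk⟩, hDMD, hMD⟩ := hD
  set M := A + B with hM
  obtain ⟨E, hE, hcomm⟩ := exists_E M (squarefree_minpoly_add hdA hdB hAB)
  -- basic commutation facts
  have hAM : A * M = M * A := by rw [hM]; noncomm_ring [hAB]
  have hBM : B * M = M * B := by rw [hM]; noncomm_ring [hAB]
  have hCM : C * M = M * C := by rw [hM]; noncomm_ring [hAC, hBC]
  have hAE : A * E = E * A := hcomm A hAM
  have hBE : B * E = E * B := hcomm B hBM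
  have hCE : C * E = E * C := hcomm C hCM
  have hDE : D * E = E * D := hcomm D hMD.symm
  have hEM : M * E = E * M := hcomm M rfl
  have hcME : Commute M E := hEM
  -- M * E * M = M
  have hMEM : M * E * M = M := by rw [mul_assoc, ← hEM, ← mul_assoc, hE]
  -- chain : M^(j+1) * E^j = M
  have chain : ∀ j : ℕ, M ^ (j + 1) * E ^ j = M := by
    intro j
    induction j with
    | zero => simp
    | succ j ih =>
        have h1 : M * E ^ j = E ^ j * M := (hcME.pow_right j).eq
        have key : M ^ (j + 1 + 1) * E ^ (j + 1)
            = (M ^ (j + 1) * E ^ j) * (M * E) := by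
          rw [pow_succ M (j + 1), pow_succ E j]
          calc M ^ (j+1) * M * (E ^ j * E) = M ^ (j+1) * (M * E ^ j) * E := by
                noncomm_ring
            _ = M ^ (j+1) * (E ^ j * M) * E := by rw [h1]
            _ = (M ^ (j+1) * E ^ j) * (M * E) := by noncomm_ring
        rw [key, ih, ← mul_assoc, hE]
  -- M * D = M * E
  have hMDME : M * D = M * E := by
    cases k with
    | zero =>
        have hk1 : M * D = 1 := by simpa using hk
        have hDM1 : D * M = 1 := by rw [← hMD]; exact hk1
        have hME1 : M * E = 1 := by
          calc M * E = D * M * (M * E) := by rw [hDM1, one_mul]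
            _ = D * (M * M * E) := by noncomm_ring
            _ = D * M := by rw [hE]
            _ = 1 := hDM1
        rw [hk1, hME1]
    | succ j =>
        have hDE2 : Commute D E := hDE
        have hDEpow : D * E ^ (j + 1) = E ^ (j + 1) * D := (hDE2.pow_right (j + 1)).eq
        have h1 : M ^ (j + 1 + 1) * D * E ^ (j + 1) = M ^ (j + 1) * E ^ (j + 1) := by rw [hk]
        rw [mul_assoc, hDEpow, ← mul_assoc, chain (j + 1)] at h1
        have h2 : M ^ (j + 1) * E ^ (j + 1) = M * E := by
          rw [pow_succ E j, ← mul_assoc, chain j]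
        rw [h1, h2]
  -- D is a polynomial in M
  have hDeq : D = M * E * E := by
    calc D = D * M * D := hDMD.symm
      _ = D * (M * D) := by rw [mul_assoc]
      _ = D * (M * E) := by rw [hMDME]
      _ = (D * M) * E := by rw [mul_assoc]
      _ = (M * D) * E := by rw [hMD]
      _ = (M * E) * E := by rw [hMDME]
  have hDA : A * D = D * A := by rw [hDeq]; exact sandwich hAM hAE
  have hDC : C * D = D * C := by rw [hDeq]; exact sandwich hCM hCE
  -- key rewriting of the candidate solution
  have key : A * (D * C) + (D * C) * B = (M * E) * C := by
    have h1 : A * (D * C) = D * (A * C) := by rw [← mul_assoc, hDA, mul_assoc]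
    have h2 : (D * C) * B = D * (B * C) := by rw [mul_assoc, ← hBC]
    rw [h1, h2, ← mul_add]
    have h3 : A * C + B * C = M * C := by rw [hM]; noncomm_ring
    rw [h3, ← mul_assoc, ← hMD, hMDME]
  -- solvability implies the projection condition
  have fact1 : (∃ X : Matrix (Fin n) (Fin n) ℂ, A * X + X * B = C) → M * E * C = C := by
    rintro ⟨X, hX⟩
    set F := (1 : Matrix (Fin n) (Fin n) ℂ) - M * E with hF
    have hFM : F * M = 0 := by rw [hF, sub_mul, one_mul, hMEM, sub_self]
    have hFA : F * A = A * F := by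
      rw [hF, sub_mul, mul_sub, one_mul, mul_one, swapME hAM hAE]
    have hFB : F * B = B * F := by
      rw [hF, sub_mul, mul_sub, one_mul, mul_one, swapME hBM hBE]
    have hFC : F * C = C * F := by
      rw [hF, sub_mul, mul_sub, one_mul, mul_one, swapME hCM hCE]
    have hFAB : F * A = -(F * B) := by
      have h0 : F * A + F * B = 0 := by
        rw [← mul_add, ← hM]; exact hFM
      exact eq_neg_of_add_eq_zero_left h0
    have hFC0 : F * C = (F * X) * B - B * (F * X) := by
      calc F * C = F * (A * X) + F * (X * B) := by rw [← hX, mul_add]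
        _ = (F * A) * X + (F * X) * B := by noncomm_ring
        _ = -((F * B) * X) + (F * X) * B := by rw [hFAB]; noncomm_ring
        _ = -(B * (F * X)) + (F * X) * B := by rw [hFB, mul_assoc]
        _ = (F * X) * B - B * (F * X) := by noncomm_ring
    have hWB : (F * C) * B = B * (F * C) := by
      calc (F * C) * B = F * (C * B) := by rw [mul_assoc]
        _ = F * (B * C) := by rw [← hBC]
        _ = (F * B) * C := by rw [mul_assoc]
        _ = B * (F * C) := by rw [hFB, mul_assoc]
    have hz : F * C = 0 := commutator_eq_zero hdB hFC0 hWB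
    have hz2 : C - M * E * C = 0 := by
      rw [hF, sub_mul, one_mul] at hz; exact hz
    have := sub_eq_zero.mp hz2
    exact this.symm
  refine ⟨⟨fun h => by rw [key]; exact fact1 h, fun h => ⟨D * C, h⟩⟩,
    ⟨fun h => ⟨E * C, by rw [← mul_assoc]; exact fact1 h⟩, ?_⟩⟩
  rintro ⟨X, hX⟩
  have hcond : M * E * C = C := by
    rw [← hX]
    calc M * E * (M * X) = (M * E * M) * X := by rw [mul_assoc, mul_assoc, mul_assoc]
      _ = M * X := by rw [hMEM]
  exact ⟨D * C, by rw [key, hcond]⟩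
end

section
/- Let A be a normal n×n matrix and C a Hermitian matrix with AC = CA. Then X̂ = (A + A*)† C is a Hermitian matrix that commutes with A, A*, and C, where † denotes the Moore–Penrose inverse. -/
open Matrix

/-- `P` is the Moore–Penrose inverse of `A`. -/
def IsMoorePenroseInverse {n : ℕ} (A P : Matrix (Fin n) (Fin n) ℂ) : Prop :=
  A * P * A = A ∧ P * A * P = P ∧ (A * P)ᴴ = A * P ∧ (P * A)ᴴ = P * A

lemma mp_unique {n : ℕ} (B P Q : Matrix (Fin n) (Fin n) ℂ)
    (hP : IsMoorePenroseInverse B P) (hQ : IsMoorePenroseInverse B Q) : P = Q := by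
  obtain ⟨hP1, hP2, hP3, hP4⟩ := hP
  obtain ⟨hQ1, hQ2, hQ3, hQ4⟩ := hQ
  have hBP : B * P = B * Q := by
    calc B * P = (B * Q * B) * P := by rw [hQ1]
    _ = (B * Q) * (B * P) := by noncomm_ring
    _ = (B * Q)ᴴ * (B * P)ᴴ := by rw [hQ3, hP3]
    _ = Qᴴ * (B * P * B)ᴴ := by
        simp only [conjTranspose_mul]; noncomm_ring
    _ = Qᴴ * Bᴴ := by rw [hP1]
    _ = (B * Q)ᴴ := by rw [conjTranspose_mul]
    _ = B * Q := hQ3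
  have hPB : P * B = Q * B := by
    calc P * B = P * (B * Q * B) := by rw [hQ1]
    _ = (P * B) * (Q * B) := by noncomm_ring
    _ = (P * B)ᴴ * (Q * B)ᴴ := by rw [hP4, hQ4]
    _ = (B * P * B)ᴴ * Qᴴ := by
        simp only [conjTranspose_mul]; noncomm_ring
    _ = Bᴴ * Qᴴ := by rw [hP1]
    _ = (Q * B)ᴴ := by rw [conjTranspose_mul]
    _ = Q * B := hQ4
  calc P = P * B * P := hP2.symm
  _ = Q * B * P := by rw [hPB]
  _ = Q * (B * P) := by rw [mul_assoc]
  _ = Q * (B * Q) := by rw [hBP]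
  _ = Q * B * Q := by rw [mul_assoc]
  _ = Q := hQ2

lemma mp_comm {n : ℕ} (B P M : Matrix (Fin n) (Fin n) ℂ)
    (hB : Bᴴ = B) (hP : IsMoorePenroseInverse B P)
    (hM : M * B = B * M) (hM' : Mᴴ * B = B * Mᴴ) : M * P = P * M := by
  obtain ⟨hP1, hP2, hP3, hP4⟩ := hP
  -- P is Hermitian
  have hPH : Pᴴ = P := by
    refine mp_unique B Pᴴ P ⟨?_, ?_, ?_, ?_⟩ ⟨hP1, hP2, hP3, hP4⟩
    · calc B * Pᴴ * B = (Bᴴ * P * Bᴴ)ᴴ := by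
            simp only [conjTranspose_mul, conjTranspose_conjTranspose]; noncomm_ring
      _ = (B * P * B)ᴴ := by rw [hB]
      _ = Bᴴ := by rw [hP1]
      _ = B := hB
    · calc Pᴴ * B * Pᴴ = (P * B * P)ᴴ := by
            simp only [conjTranspose_mul, hB, mul_assoc]
      _ = Pᴴ := by rw [hP2]
    · calc (B * Pᴴ)ᴴ = P * Bᴴ := by
            simp only [conjTranspose_mul, conjTranspose_conjTranspose]
      _ = P * B := by rw [hB]
      _ = (P * B)ᴴ := hP4.symm
      _ = Bᴴ * Pᴴ := by rw [conjTranspose_mul]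
      _ = B * Pᴴ := by rw [hB]
    · calc (Pᴴ * B)ᴴ = Bᴴ * P := by
            simp only [conjTranspose_mul, conjTranspose_conjTranspose]
      _ = B * P := by rw [hB]
      _ = (B * P)ᴴ := hP3.symm
      _ = Pᴴ * Bᴴ := by rw [conjTranspose_mul]
      _ = Pᴴ * B := by rw [hB]
  -- E := B * P is Hermitian and equals P * B
  have hE : B * P = P * B := by
    calc B * P = (B * P)ᴴ := hP3.symm
    _ = Pᴴ * Bᴴ := by rw [conjTranspose_mul]
    _ = P * B := by rw [hPH, hB]
  -- E M E = M E
  have h1 : (B * P) * M * (B * P) = M * (B * P) := by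
    calc (B * P) * M * (B * P) = B * P * (M * B) * P := by noncomm_ring
    _ = B * P * (B * M) * P := by rw [hM]
    _ = (B * P * B) * (M * P) := by noncomm_ring
    _ = B * (M * P) := by rw [hP1]
    _ = (B * M) * P := by rw [mul_assoc]
    _ = (M * B) * P := by rw [hM]
    _ = M * (B * P) := by rw [mul_assoc]
  -- E Mᴴ E = Mᴴ E, conjugate-transposed gives E M E = E M
  have h2 : (B * P) * M * (B * P) = (B * P) * M := by
    have h2' : (B * P) * Mᴴ * (B * P) = Mᴴ * (B * P) := by
      calc (B * P) * Mᴴ * (B * P) = B * P * (Mᴴ * B) * P := by noncomm_ring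
      _ = B * P * (B * Mᴴ) * P := by rw [hM']
      _ = (B * P * B) * (Mᴴ * P) := by noncomm_ring
      _ = B * (Mᴴ * P) := by rw [hP1]
      _ = (B * Mᴴ) * P := by rw [mul_assoc]
      _ = (Mᴴ * B) * P := by rw [hM']
      _ = Mᴴ * (B * P) := by rw [mul_assoc]
    have := congrArg conjTranspose h2'
    simp only [conjTranspose_mul, conjTranspose_conjTranspose, hP3] at this
    calc (B * P) * M * (B * P) = B * P * (M * (B * P)) := by noncomm_ring
    _ = (B * P) * M := by rw [← this]
  have hME : M * (B * P) = (B * P) * M := by rw [← h1, h2]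
  -- conclude
  calc M * P = M * (P * B * P) := by rw [hP2]
  _ = (M * (B * P)) * P := by rw [hE]; noncomm_ring
  _ = ((B * P) * M) * P := by rw [hME]
  _ = P * (B * M) * P := by rw [hE]; noncomm_ring
  _ = P * (M * B) * P := by rw [hM]
  _ = P * (M * (B * P)) := by noncomm_ring
  _ = P * ((B * P) * M) := by rw [hME]
  _ = (P * B * P) * M := by noncomm_ring
  _ = P * M := by rw [hP2]

/-- For `A` normal and `C` Hermitian with `AC = CA`, the matrix
`X̂ = (A + Aᴴ)† * C` is Hermitian and commutes with `A`, `Aᴴ` and `C`. -/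
theorem stmt11 {n : ℕ} (A C : Matrix (Fin n) (Fin n) ℂ)
    (hA : A * Aᴴ = Aᴴ * A) (hC : Cᴴ = C) (hAC : A * C = C * A)
    (P : Matrix (Fin n) (Fin n) ℂ) (hP : IsMoorePenroseInverse (A + Aᴴ) P) :
    (P * C)ᴴ = P * C ∧
    A * (P * C) = (P * C) * A ∧
    Aᴴ * (P * C) = (P * C) * Aᴴ ∧
    C * (P * C) = (P * C) * C := by
  set B := A + Aᴴ with hBdef
  have hB : Bᴴ = B := by
    simp [hBdef, conjTranspose_add, add_comm]
  have hAB : A * B = B * A := by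
    simp only [hBdef, mul_add, add_mul, hA]
  have hAHB : Aᴴ * B = B * Aᴴ := by
    simp only [hBdef, mul_add, add_mul, hA]
  have hAHC : Aᴴ * C = C * Aᴴ := by
    have := congrArg conjTranspose hAC
    simp only [conjTranspose_mul, hC] at this
    exact this.symm
  have hCB : C * B = B * C := by
    simp only [hBdef, mul_add, add_mul, hAC, hAHC]
  have hAP : A * P = P * A := mp_comm B P A hB hP hAB hAHB
  have hAHP : Aᴴ * P = P * Aᴴ := by
    refine mp_comm B P Aᴴ hB hP hAHB ?_
    simpa using hAB
  have hCP : C * P = P * C := by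
    refine mp_comm B P C hB hP hCB ?_
    rw [hC]; exact hCB
  have hPH : Pᴴ = P := by
    obtain ⟨hP1, hP2, hP3, hP4⟩ := hP
    refine mp_unique B Pᴴ P ⟨?_, ?_, ?_, ?_⟩ ⟨hP1, hP2, hP3, hP4⟩
    · calc B * Pᴴ * B = (Bᴴ * P * Bᴴ)ᴴ := by
            simp only [conjTranspose_mul, conjTranspose_conjTranspose]; noncomm_ring
      _ = (B * P * B)ᴴ := by rw [hB]
      _ = Bᴴ := by rw [hP1]
      _ = B := hB
    · calc Pᴴ * B * Pᴴ = (P * B * P)ᴴ := by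
            simp only [conjTranspose_mul, hB, mul_assoc]
      _ = Pᴴ := by rw [hP2]
    · calc (B * Pᴴ)ᴴ = P * Bᴴ := by
            simp only [conjTranspose_mul, conjTranspose_conjTranspose]
      _ = P * B := by rw [hB]
      _ = (P * B)ᴴ := hP4.symm
      _ = Bᴴ * Pᴴ := by rw [conjTranspose_mul]
      _ = B * Pᴴ := by rw [hB]
    · calc (Pᴴ * B)ᴴ = Bᴴ * P := by
            simp only [conjTranspose_mul, conjTranspose_conjTranspose]
      _ = B * P := by rw [hB]
      _ = (B * P)ᴴ := hP3.symm
      _ = Pᴴ * Bᴴ := by rw [conjTranspose_mul]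
      _ = Pᴴ * B := by rw [hB]
  refine ⟨?_, ?_, ?_, ?_⟩
  · rw [conjTranspose_mul, hC, hPH, hCP]
  · rw [← mul_assoc, hAP, mul_assoc, hAC, mul_assoc]
  · rw [← mul_assoc, hAHP, mul_assoc, hAHC, mul_assoc]
  · rw [← mul_assoc, hCP, mul_assoc]
end

section
/- Let A be a normal n×n matrix and C Hermitian with AC = CA. The continuous Lyapunov equation A*X + XA = C has a solution if and only if X̂ = (A + A*)† C is a solution. -/
open Matrix

section StarRing

variable {R : Type*} [Ring R] [StarRing R]

/-- Moore–Penrose conditions in an arbitrary star ring. -/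
def IsMP (S p : R) : Prop :=
  S * p * S = S ∧ p * S * p = p ∧ star (S * p) = S * p ∧ star (p * S) = p * S

lemma mp_unique_s12 {S p q : R} (hp : IsMP S p) (hq : IsMP S q) : p = q := by
  obtain ⟨p1, p2, p3, p4⟩ := hp
  obtain ⟨q1, q2, q3, q4⟩ := hq
  have hl : S * p = S * q := by
    calc S * p = S * q * S * p := by rw [q1]
    _ = S * q * (S * p) := by rw [mul_assoc]
    _ = star (S * q) * star (S * p) := by rw [q3, p3]
    _ = star (S * p * (S * q)) := by simp only [StarMul.star_mul, mul_assoc]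
    _ = star (S * p * S * q) := by simp only [mul_assoc]
    _ = star (S * q) := by rw [p1]
    _ = S * q := q3
  have hr : p * S = q * S := by
    calc p * S = p * (S * q * S) := by rw [q1]
    _ = p * S * (q * S) := by simp only [mul_assoc]
    _ = star (p * S) * star (q * S) := by rw [p4, q4]
    _ = star (q * S * (p * S)) := by simp only [StarMul.star_mul, mul_assoc]
    _ = star (q * (S * p * S)) := by simp only [mul_assoc]
    _ = star (q * S) := by rw [p1]
    _ = q * S := q4
  calc p = p * S * p := p2.symm
  _ = q * S * p := by rw [hr]
  _ = q * (S * p) := by rw [mul_assoc]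
  _ = q * (S * q) := by rw [hl]
  _ = q * S * q := by rw [← mul_assoc]
  _ = q := q2

lemma star_mp {S p : R} (hS : star S = S) (hp : IsMP S p) : IsMP S (star p) := by
  obtain ⟨p1, p2, p3, p4⟩ := hp
  refine ⟨?_, ?_, ?_, ?_⟩
  · calc S * star p * S = star S * star p * star S := by rw [hS]
    _ = star (S * (p * S)) := by simp only [StarMul.star_mul, mul_assoc]
    _ = star (S * p * S) := by simp only [mul_assoc]
    _ = star S := by rw [p1]
    _ = S := hS
  · calc star p * S * star p = star p * star S * star p := by rw [hS]
    _ = star (p * (S * p)) := by simp only [StarMul.star_mul, mul_assoc]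
    _ = star (p * S * p) := by simp only [mul_assoc]
    _ = star p := by rw [p2]
  · calc star (S * star p) = star (star p) * star S := by rw [StarMul.star_mul]
    _ = p * S := by rw [star_star, hS]
    _ = star (p * S) := p4.symm
    _ = star S * star p := by rw [StarMul.star_mul]
    _ = S * star p := by rw [hS]
  · calc star (star p * S) = star S * star (star p) := by rw [StarMul.star_mul]
    _ = S * p := by rw [star_star, hS]
    _ = star (S * p) := p3.symm
    _ = star p * star S := by rw [StarMul.star_mul]
    _ = star p * S := by rw [hS]

lemma mp_comm_s12 {S p b : R} (hS : star S = S) (hp : IsMP S p) (hps : star p = p)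
    (hb : b * S = S * b) (hb' : star b * S = S * star b) : b * p = p * b := by
  obtain ⟨h1, h2, h3, h4⟩ := hp
  have he : p * S = S * p := by
    calc p * S = star (p * S) := h4.symm
    _ = star S * star p := by rw [StarMul.star_mul]
    _ = S * p := by rw [hS, hps]
  have hse : star (S * p) = S * p := by rw [StarMul.star_mul, hps, hS, he]
  have step : ∀ c : R, c * S = S * c → S * p * c * (S * p) = c * (S * p) := by
    intro c hc
    calc S * p * c * (S * p) = S * p * (c * S) * p := by simp only [mul_assoc]
    _ = S * p * (S * c) * p := by rw [hc]
    _ = S * p * S * (c * p) := by simp only [mul_assoc]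
    _ = S * (c * p) := by rw [h1]
    _ = S * c * p := by rw [mul_assoc]
    _ = c * S * p := by rw [hc]
    _ = c * (S * p) := by rw [mul_assoc]
  have hsb := step (star b) hb'
  have h5 : S * p * b * (S * p) = S * p * b := by
    have h6 := congrArg star hsb
    calc S * p * b * (S * p)
        = star (S * p) * star (star b) * star (S * p) := by rw [hse, star_star]
      _ = star (S * p * star b * (S * p)) := by
          simp only [StarMul.star_mul, star_star, mul_assoc]
      _ = star (star b * (S * p)) := by rw [hsb]
      _ = star (S * p) * star (star b) := by rw [StarMul.star_mul]
      _ = S * p * b := by rw [hse, star_star]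
  have heb : S * p * b = b * (S * p) := by rw [← h5, step b hb]
  have hpe : p * (S * p) = p := by rw [← mul_assoc]; exact h2
  symm
  calc p * b
      = p * (S * p) * b := by rw [hpe]
    _ = p * (S * p * b) := by simp only [mul_assoc]
    _ = p * (b * (S * p)) := by rw [heb]
    _ = p * (b * S) * p := by simp only [mul_assoc]
    _ = p * (S * b) * p := by rw [hb]
    _ = p * S * (b * p) := by simp only [mul_assoc]
    _ = S * p * (b * p) := by rw [he]
    _ = S * p * b * p := by rw [← mul_assoc]
    _ = b * (S * p) * p := by rw [heb]
    _ = b * (p * S) * p := by rw [← he]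
    _ = b * (p * S * p) := by simp only [mul_assoc]
    _ = b * p := by rw [h2]

end StarRing

lemma trace_conjTranspose_mul_self_zero {n : ℕ} (D : Matrix (Fin n) (Fin n) ℂ)
    (h : (Dᴴ * D).trace = 0) : D = 0 := by
  have h1 : ∑ i, ∑ j, (Complex.normSq (D j i) : ℂ) = 0 := by
    rw [← h]
    simp [Matrix.trace, Matrix.diag, Matrix.mul_apply, conjTranspose_apply,
      Complex.star_def, ← Complex.normSq_eq_conj_mul_self]
  have h2 : ∑ i, ∑ j, Complex.normSq (D j i) = 0 := by exact_mod_cast h1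
  ext i j
  have h3 := (Finset.sum_eq_zero_iff_of_nonneg (fun i _ => Finset.sum_nonneg
    (fun j _ => Complex.normSq_nonneg _))).mp h2 j (Finset.mem_univ _)
  have h4 := (Finset.sum_eq_zero_iff_of_nonneg
    (fun j _ => Complex.normSq_nonneg _)).mp h3 i (Finset.mem_univ _)
  simpa using Complex.normSq_eq_zero.mp h4

/-- For `A` normal and `C` Hermitian with `AC = CA`, the continuous Lyapunov
equation `AᴴX + XA = C` has a solution iff `X̂ = (A + Aᴴ)† * C` is a solution. -/
theorem stmt12 {n : ℕ} (A C : Matrix (Fin n) (Fin n) ℂ)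
    (hA : A * Aᴴ = Aᴴ * A) (hC : Cᴴ = C) (hAC : A * C = C * A)
    (P : Matrix (Fin n) (Fin n) ℂ) (hP : IsMoorePenroseInverse (A + Aᴴ) P) :
    (∃ X : Matrix (Fin n) (Fin n) ℂ, Aᴴ * X + X * A = C) ↔
      Aᴴ * (P * C) + (P * C) * A = C := by
  obtain ⟨m1, m2, m3, m4⟩ := hP
  simp only [← Matrix.star_eq_conjTranspose] at hA hC hAC m1 m2 m3 m4 ⊢
  set S := A + star A with hSdef
  have hmp : IsMP S P := ⟨m1, m2, m3, m4⟩
  have hS : star S = S := by rw [hSdef]; rw [star_add, star_star, add_comm]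
  have hps : star P = P := mp_unique_s12 (star_mp hS hmp) hmp
  have hAS : A * S = S * A := by rw [hSdef, mul_add, add_mul, hA]
  have hA'S : star A * S = S * star A := by rw [hSdef, mul_add, add_mul, hA]
  have hCA' : C * star A = star A * C := by
    calc C * star A = star C * star A := by rw [hC]
    _ = star (A * C) := (StarMul.star_mul _ _).symm
    _ = star (C * A) := by rw [hAC]
    _ = star A * star C := StarMul.star_mul _ _
    _ = star A * C := by rw [hC]
  have hCS : C * S = S * C := by rw [hSdef, mul_add, add_mul, hAC, hCA']
  have hAP : A * P = P * A := mp_comm_s12 hS hmp hps hAS hA'S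
  have hA'P : star A * P = P * star A :=
    mp_comm_s12 hS hmp hps hA'S (by rwa [star_star])
  have hCP : C * P = P * C := mp_comm_s12 hS hmp hps hCS (by rwa [hC])
  have hPS : P * S = S * P := by
    calc P * S = star (P * S) := m4.symm
    _ = star S * star P := StarMul.star_mul _ _
    _ = S * P := by rw [hS, hps]
  constructor
  · rintro ⟨X, hX⟩
    set F := (1 : Matrix (Fin n) (Fin n) ℂ) - S * P with hF
    have hEE : S * P * (S * P) = S * P := by rw [← mul_assoc, m1]
    have hSE : S * (S * P) = S := by rw [← hPS, ← mul_assoc]; exact m1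
    have hSF : S * F = 0 := by rw [hF, mul_sub, mul_one, hSE, sub_self]
    have comm_to_F : ∀ b : Matrix (Fin n) (Fin n) ℂ,
        b * S = S * b → b * P = P * b → b * F = F * b := by
      intro b hbS hbP
      have hb2 : b * (S * P) = S * P * b := by
        calc b * (S * P) = b * S * P := (mul_assoc _ _ _).symm
        _ = S * b * P := by rw [hbS]
        _ = S * (b * P) := mul_assoc _ _ _
        _ = S * (P * b) := by rw [hbP]
        _ = S * P * b := (mul_assoc _ _ _).symm
      rw [hF, mul_sub, sub_mul, mul_one, one_mul, hb2]
    have hFA : A * F = F * A := comm_to_F A hAS hAP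
    have hFA' : star A * F = F * star A := comm_to_F (star A) hA'S hA'P
    have hFC : C * F = F * C := comm_to_F C hCS hCP
    have hFF : F * F = F := by
      rw [hF, sub_mul, one_mul, mul_sub, mul_one, hEE, sub_self, sub_zero]
    have hFstar : star F = F := by
      rw [hF, star_sub, star_one, StarMul.star_mul, hps, hS, hPS]
    have hA'F : star A * F = - (A * F) := by
      have h7 : star A = S - A := by rw [hSdef, add_sub_cancel_left]
      rw [h7, sub_mul, hSF, zero_sub]
    have piece1 : F * X * (F * A) = (F * X * F) * (A * F) := by
      calc F * X * (F * A) = F * X * (A * F) := by rw [← hFA]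
      _ = F * X * (A * (F * F)) := by rw [hFF]
      _ = F * X * (A * F * F) := by rw [mul_assoc A F F]
      _ = F * X * (F * A * F) := by rw [← hFA]
      _ = F * X * F * (A * F) := by simp only [mul_assoc]
    have piece3 : A * F * (X * F) = (A * F) * (F * X * F) := by
      calc A * F * (X * F) = A * (F * (X * F)) := mul_assoc _ _ _
      _ = A * (F * F * (X * F)) := by rw [hFF]
      _ = A * F * (F * X * F) := by simp only [mul_assoc]
    have hDcomm : C * F = (F * X * F) * (A * F) - (A * F) * (F * X * F) := by
      have e1 : F * C * F = C * F := by
        calc F * C * F = C * F * F := by rw [← hFC]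
        _ = C * (F * F) := mul_assoc _ _ _
        _ = C * F := by rw [hFF]
      calc C * F = F * C * F := e1.symm
      _ = F * (star A * X + X * A) * F := by rw [hX]
      _ = F * (star A * X) * F + F * (X * A) * F := by rw [mul_add, add_mul]
      _ = (F * star A) * (X * F) + F * X * (A * F) := by simp only [mul_assoc]
      _ = (star A * F) * (X * F) + F * X * (F * A) := by rw [hFA', hFA]
      _ = (- (A * F)) * (X * F) + (F * X * F) * (A * F) := by rw [hA'F, piece1]
      _ = -((A * F) * (X * F)) + (F * X * F) * (A * F) := by rw [neg_mul]
      _ = -((A * F) * (F * X * F)) + (F * X * F) * (A * F) := by rw [piece3]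
      _ = (F * X * F) * (A * F) - (A * F) * (F * X * F) := by abel
    have hDB : (C * F) * (A * F) = (A * F) * (C * F) := by
      calc C * F * (A * F) = C * (F * A) * F := by simp only [mul_assoc]
      _ = C * (A * F) * F := by rw [← hFA]
      _ = C * A * (F * F) := by simp only [mul_assoc]
      _ = C * A * F := by rw [hFF]
      _ = A * C * F := by rw [← hAC]
      _ = A * (C * F) * F := by simp only [mul_assoc, hFF]
      _ = A * (F * C) * F := by rw [hFC]
      _ = A * F * (C * F) := by simp only [mul_assoc]
    have hDstar : star (C * F) = C * F := by
      rw [StarMul.star_mul, hFstar, hC, ← hFC]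
    have key : ((C * F) * ((F * X * F) * (A * F))).trace
        = ((C * F) * ((A * F) * (F * X * F))).trace := by
      calc ((C * F) * ((F * X * F) * (A * F))).trace
          = ((C * F) * (F * X * F) * (A * F)).trace := by simp only [mul_assoc]
      _ = ((A * F) * ((C * F) * (F * X * F))).trace := trace_mul_comm _ _
      _ = ((A * F) * (C * F) * (F * X * F)).trace := by simp only [mul_assoc]
      _ = ((C * F) * (A * F) * (F * X * F)).trace := by rw [hDB]
      _ = ((C * F) * ((A * F) * (F * X * F))).trace := by rw [mul_assoc]
    have htr : (star (C * F) * (C * F)).trace = 0 := by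
      rw [hDstar]
      nth_rewrite 2 [hDcomm]
      rw [mul_sub, trace_sub, key, sub_self]
    have hD0 : C * F = 0 := trace_conjTranspose_mul_self_zero (C * F)
      (by rwa [Matrix.star_eq_conjTranspose] at htr)
    have hCE : C * (S * P) = C := by
      rw [hF, mul_sub, mul_one] at hD0
      exact (sub_eq_zero.mp hD0).symm
    calc star A * (P * C) + (P * C) * A
        = star A * P * C + P * (C * A) := by simp only [mul_assoc]
      _ = P * star A * C + P * (A * C) := by rw [hA'P, ← hAC]
      _ = P * (star A * C) + P * (A * C) := by rw [mul_assoc]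
      _ = P * (star A * C + A * C) := by rw [mul_add]
      _ = P * ((star A + A) * C) := by rw [add_mul]
      _ = P * (S * C) := by rw [hSdef, add_comm (star A) A]
      _ = P * (C * S) := by rw [← hCS]
      _ = P * C * S := by rw [← mul_assoc]
      _ = C * P * S := by rw [← hCP]
      _ = C * (P * S) := mul_assoc _ _ _
      _ = C * (S * P) := by rw [hPS]
      _ = C := hCE
  · intro h
    exact ⟨P * C, h⟩
end
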